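/- arXiv:0706.0111 — 9 statements merged into one kernel-verified Lean document; each statement's English description precedes it below -/
import Mathlib

section
/- Let R be a ring and let M be a left R-module that is both P-flat and a content module. Then M is singly projective. -/
/-! Content lets us write `x = ∑ c(m) • m` with every coefficient `c(m)` in the content ideal
`c(x)`. If `s • x = 0`, P-flatness puts `x` in `r(s)·M`, so `c(x) ⊆ r(s)` and `s • c = 0`.
Hence `s • x ↦ s • c` is a well-defined map `R ∙ x ≅ R ⧸ ann(x) → R^(M)`, and the linear
combination map `R^(M) → M` sends `s • c` back to `s • x`. -/

universe u v

/-- For a subset `A` of `R` and a left `R`-module `M`, the additive subgroup `A·M` of `M`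
generated by the products `a • m` with `a ∈ A`, `m ∈ M`. -/
def Set.smulAddSubgroup {R : Type u} [Ring R] (A : Set R) (M : Type v) [AddCommGroup M]
    [Module R M] : AddSubgroup M :=
  AddSubgroup.closure {y : M | ∃ a ∈ A, ∃ m : M, y = a • m}

/-- A left `R`-module `M` is P-flat if whenever `s • x = 0` one has `x ∈ r(s)·M`,
where `r(s)` is the right annihilator of `s` in `R`. -/
def IsPFlat (R : Type u) [Ring R] (M : Type v) [AddCommGroup M] [Module R M] : Prop :=
  ∀ (s : R) (x : M), s • x = 0 → x ∈ Set.smulAddSubgroup {t : R | s * t = 0} M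

/-- The content ideal `c(x)` of `x ∈ M`: the intersection of all right ideals `A` of `R`
(submodules of `R` as a right module over itself) such that `x ∈ A·M`. -/
def contentSet (R : Type u) [Ring R] {M : Type v} [AddCommGroup M] [Module R M] (x : M) :
    Set R :=
  ⋂ A ∈ {A : Submodule Rᵐᵒᵖ R | x ∈ Set.smulAddSubgroup (A : Set R) M}, (A : Set R)

/-- `M` is a content module if `x ∈ c(x)·M` for every `x ∈ M`. -/
def IsContentModule (R : Type u) [Ring R] (M : Type v) [AddCommGroup M] [Module R M] : Prop :=
  ∀ x : M, x ∈ Set.smulAddSubgroup (contentSet R x) M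

/-- `M` is singly projective if for every cyclic submodule `N` of `M` the inclusion
`N → M` factors through a free module. -/
def SinglyProjective (R : Type u) [Ring R] (M : Type v) [AddCommGroup M] [Module R M] : Prop :=
  ∀ x : M, ∃ (ι : Type v) (φ : (Submodule.span R ({x} : Set M)) →ₗ[R] (ι →₀ R))
    (π : (ι →₀ R) →ₗ[R] M), ∀ n : (Submodule.span R ({x} : Set M)), π (φ n) = (n : M)

open Submodule

section

variable {R : Type u} [Ring R] {M : Type v} [AddCommGroup M] [Module R M]

theorem exists_finsupp_of_mem_smulAddSubgroup (A : AddSubgroup R) {x : M}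
    (hx : x ∈ Set.smulAddSubgroup (A : Set R) M) :
    ∃ c : M →₀ R, (∀ m, c m ∈ A) ∧ Finsupp.linearCombination R id c = x := by
  induction hx using AddSubgroup.closure_induction with
  | mem y hy =>
    obtain ⟨a, ha, m, rfl⟩ := hy
    refine ⟨Finsupp.single m a, fun n => ?_, by simp⟩
    classical
    rw [Finsupp.single_apply]
    split_ifs
    exacts [ha, A.zero_mem]
  | zero => exact ⟨0, fun _ => A.zero_mem, map_zero _⟩
  | add y z _ _ hy hz =>
    obtain ⟨c, hcA, rfl⟩ := hy
    obtain ⟨d, hdA, rfl⟩ := hz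
    exact ⟨c + d, fun m => A.add_mem (hcA m) (hdA m), map_add _ c d⟩
  | neg y _ hy =>
    obtain ⟨c, hcA, rfl⟩ := hy
    exact ⟨-c, fun m => A.neg_mem (hcA m), map_neg _ c⟩

theorem contentSet_subset_of_mem_smulAddSubgroup {x : M} {A : Submodule Rᵐᵒᵖ R}
    (hx : x ∈ Set.smulAddSubgroup (A : Set R) M) : contentSet R x ⊆ A :=
  Set.biInter_subset_of_mem hx

theorem contentSet_eq_sInf (x : M) :
    contentSet R x = ↑(sInf {A : Submodule Rᵐᵒᵖ R | x ∈ Set.smulAddSubgroup (A : Set R) M}) :=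
  (coe_sInf _).symm

theorem IsContentModule.exists_finsupp (h : IsContentModule R M) (x : M) :
    ∃ c : M →₀ R, (∀ m, c m ∈ contentSet R x) ∧ Finsupp.linearCombination R id c = x := by
  obtain ⟨c, hc, hcx⟩ := exists_finsupp_of_mem_smulAddSubgroup
    (sInf {A : Submodule Rᵐᵒᵖ R | x ∈ Set.smulAddSubgroup (A : Set R) M}).toAddSubgroup
    (by rw [coe_toAddSubgroup, ← contentSet_eq_sInf]; exact h x)
  exact ⟨c, fun m => by rw [contentSet_eq_sInf]; exact hc m, hcx⟩

-- `{t | s * t = 0}` is a right ideal: the kernel of the `Rᵐᵒᵖ`-linear map `t ↦ s * t`.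
theorem IsPFlat.mul_eq_zero_of_mem_contentSet (h : IsPFlat R M) {s : R} {x : M}
    (hs : s • x = 0) {a : R} (ha : a ∈ contentSet R x) : s * a = 0 :=
  contentSet_subset_of_mem_smulAddSubgroup
    (A := LinearMap.ker (DistribSMul.toLinearMap Rᵐᵒᵖ R s)) (h s x hs) ha

theorem exists_linearMap_span_singleton_apply_eq {N : Type*} [AddCommGroup N] [Module R N]
    (x : M) (y : N) (h : ∀ s : R, s • x = 0 → s • y = 0) :
    ∃ g : R ∙ x →ₗ[R] N, g ⟨x, mem_span_singleton_self x⟩ = y := by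
  let f := LinearMap.toSpanSingleton R N y
  have hf : Ideal.torsionOf R M x ≤ LinearMap.ker f := fun s hs => h s hs
  refine ⟨(Ideal.torsionOf R M x).liftQ f hf ∘ₗ
    (Ideal.quotTorsionOfEquivSpanSingleton R M x).symm.toLinearMap, ?_⟩
  have hx : (Ideal.quotTorsionOfEquivSpanSingleton R M x).symm ⟨x, mem_span_singleton_self x⟩ =
      Submodule.Quotient.mk 1 := by
    rw [LinearEquiv.symm_apply_eq, Ideal.quotTorsionOfEquivSpanSingleton_apply_mk, one_smul]
  simp [hx, f]

theorem singlyProjective_of_forall_exists_finsupp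
    (h : ∀ x : M, ∃ c : M →₀ R,
      Finsupp.linearCombination R id c = x ∧ ∀ s : R, s • x = 0 → s • c = 0) :
    SinglyProjective R M := by
  intro x
  obtain ⟨c, hcx, hc⟩ := h x
  obtain ⟨g, hg⟩ := exists_linearMap_span_singleton_apply_eq x c hc
  refine ⟨M, g, Finsupp.linearCombination R id, fun n => ?_⟩
  obtain ⟨s, hs⟩ := mem_span_singleton.1 n.2
  obtain rfl : n = s • ⟨x, mem_span_singleton_self x⟩ := Subtype.ext hs.symm
  rw [map_smul, map_smul, hg, hcx, coe_smul]

end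

/-- every P-flat content left module is singly projective. -/
theorem pFlat_content_singlyProjective (R : Type u) [Ring R] (M : Type v) [AddCommGroup M]
    [Module R M] (h1 : IsPFlat R M) (h2 : IsContentModule R M) : SinglyProjective R M := by
  refine singlyProjective_of_forall_exists_finsupp fun x => ?_
  obtain ⟨c, hc, hcx⟩ := h2.exists_finsupp x
  refine ⟨c, hcx, fun s hs => Finsupp.ext fun m => ?_⟩
  exact h1.mul_eq_zero_of_mem_contentSet hs (hc m)
end

section
/- Let R be a ring that is injective as a left module over itself. Then every singly projective left R-module is both finitely injective and locally projective. -/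
universe u v w

/-- `M` is locally projective if for every finitely generated submodule `N` of `M` there are a
free module `F` and homomorphisms `φ : M → F`, `π : F → M` with `π (φ x) = x` for all `x ∈ N`. -/
def LocallyProjective (R : Type u) [Ring R] (M : Type v) [AddCommGroup M] [Module R M] : Prop :=
  ∀ N : Submodule R M, N.FG → ∃ (ι : Type v) (φ : M →ₗ[R] (ι →₀ R))
    (π : (ι →₀ R) →ₗ[R] M), ∀ x ∈ N, π (φ x) = x

/-- `M` is finitely injective if for every finitely generated submodule `A` of an arbitrary
module `B`, every homomorphism `A → M` extends to `B`. -/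
def FinitelyInjective (R : Type u) [Ring R] (M : Type v) [AddCommGroup M] [Module R M] : Prop :=
  ∀ (B : Type w) [AddCommGroup B] [Module R B] (A : Submodule R B), A.FG →
    ∀ f : A →ₗ[R] M, ∃ g : B →ₗ[R] M, ∀ a : A, g (a : B) = f a

/-!
Over a self-injective ring, a map `R ∙ b → ι →₀ R` extends to all of `B`: coordinatewise by
injectivity of `R`, and only the finitely many coordinates of the image of `b` matter. Composing
with the factorization of `R ∙ x ⊆ M` through a free module, every assignment `b ↦ x` with
`ann b ⊆ ann x` extends to a map `B → M` that factors through a free module. Both conclusions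
follow by adjoining generators one at a time. For finite injectivity, the error `f - g` of an
extension `g` vanishes on the generators already handled, so it is corrected by such a map defined
on the quotient by them. For local projectivity, if `e` factors through a free module and fixes
the earlier generators, then `e + k ∘ (id - e)` also fixes `y`, where `k` fixes `y - e y`.
-/

theorem Ideal.torsionOf_le_torsionOf_apply {R M N : Type*} [Semiring R] [AddCommMonoid M]
    [AddCommMonoid N] [Module R M] [Module R N] (f : M →ₗ[R] N) (x : M) :
    torsionOf R M x ≤ torsionOf R N (f x) := fun r hr => by
  rw [mem_torsionOf_iff, ← map_smul, (mem_torsionOf_iff x r).mp hr, map_zero]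

open Submodule
open Ideal (torsionOf mem_torsionOf_iff torsionOf_le_torsionOf_apply
  quotTorsionOfEquivSpanSingleton)

namespace Module.Baer

variable {R : Type*} [Ring R] {Q B : Type*} [AddCommGroup Q] [Module R Q] [AddCommGroup B]
  [Module R B]

theorem exists_linearMap_apply_eq (hQ : Module.Baer R Q) {b : B} {q : Q}
    (h : torsionOf R B b ≤ torsionOf R Q q) : ∃ g : B →ₗ[R] Q, g b = q := by
  let i : (R ⧸ torsionOf R B b) →ₗ[R] B :=
    (R ∙ b).subtype ∘ₗ (quotTorsionOfEquivSpanSingleton R B b).toLinearMap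
  have hi : Function.Injective i :=
    (injective_subtype _).comp (LinearEquiv.injective _)
  obtain ⟨g, hg⟩ := hQ.extension_property i hi ((torsionOf R B b).liftQ _ h)
  refine ⟨g, ?_⟩
  simpa [i] using (LinearMap.congr_fun hg (Submodule.Quotient.mk 1)).trans (one_smul R q)

theorem exists_linearMap_finsupp_apply_eq (hQ : Module.Baer R Q) {ι : Type*} {b : B}
    {c : ι →₀ Q} (h : torsionOf R B b ≤ torsionOf R (ι →₀ Q) c) :
    ∃ g : B →ₗ[R] ι →₀ Q, g b = c := by
  choose g hg using fun i =>
    hQ.exists_linearMap_apply_eq (h.trans (torsionOf_le_torsionOf_apply (Finsupp.lapply i) c))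
  refine ⟨∑ i ∈ c.support, Finsupp.lsingle i ∘ₗ g i, ?_⟩
  simp [hg]
  exact c.sum_single

end Module.Baer

section FactorsThroughFree

variable {R : Type u} [Ring R] {B B' : Type*} {M : Type v} [AddCommGroup B] [Module R B]
  [AddCommGroup B'] [Module R B'] [AddCommGroup M] [Module R M]

def LinearMap.FactorsThroughFree (f : B →ₗ[R] M) : Prop :=
  ∃ (ι : Type v) (φ : B →ₗ[R] ι →₀ R) (π : (ι →₀ R) →ₗ[R] M), π ∘ₗ φ = f

namespace LinearMap.FactorsThroughFree

theorem zero : (0 : B →ₗ[R] M).FactorsThroughFree :=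
  ⟨PEmpty, 0, 0, rfl⟩

theorem add {f g : B →ₗ[R] M} (hf : f.FactorsThroughFree) (hg : g.FactorsThroughFree) :
    (f + g).FactorsThroughFree := by
  obtain ⟨ι₁, φ₁, π₁, rfl⟩ := hf
  obtain ⟨ι₂, φ₂, π₂, rfl⟩ := hg
  let e : (ι₁ ⊕ ι₂ →₀ R) ≃ₗ[R] (ι₁ →₀ R) × (ι₂ →₀ R) := Finsupp.sumFinsuppLEquivProdFinsupp R
  refine ⟨ι₁ ⊕ ι₂, e.symm ∘ₗ φ₁.prod φ₂, π₁.coprod π₂ ∘ₗ e, ?_⟩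
  ext x
  simp

theorem comp {f : B →ₗ[R] M} (hf : f.FactorsThroughFree) (h : B' →ₗ[R] B) :
    (f ∘ₗ h).FactorsThroughFree := by
  obtain ⟨ι, φ, π, rfl⟩ := hf
  exact ⟨ι, φ ∘ₗ h, π, rfl⟩

end LinearMap.FactorsThroughFree

end FactorsThroughFree

namespace SinglyProjective

variable {R : Type u} [Ring R] {M : Type v} [AddCommGroup M] [Module R M]

theorem exists_factorsThroughFree_apply_eq (hR : Module.Baer R R) (hM : SinglyProjective R M)
    {B : Type*} [AddCommGroup B] [Module R B] {b : B}
    {x : M} (h : torsionOf R B b ≤ torsionOf R M x) :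
    ∃ k : B →ₗ[R] M, k.FactorsThroughFree ∧ k b = x := by
  obtain ⟨ι, φ, π, hπφ⟩ := hM x
  let x' : R ∙ x := ⟨x, mem_span_singleton_self x⟩
  have hx' : torsionOf R M x ≤ torsionOf R (R ∙ x) x' := fun r hr => Subtype.ext hr
  obtain ⟨θ, hθ⟩ := hR.exists_linearMap_finsupp_apply_eq
    (h.trans (hx'.trans (torsionOf_le_torsionOf_apply φ x')))
  exact ⟨π ∘ₗ θ, ⟨ι, θ, π, rfl⟩, by simp [hθ, hπφ, x']⟩

theorem exists_le_eqLocus_sup_span_singleton (hR : Module.Baer R R)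
    (hM : SinglyProjective R M) {B : Type*} [AddCommGroup B] [Module R B]
    {A : Submodule R B} (f : A →ₗ[R] M) {g : B →ₗ[R] M} {C : Submodule R A}
    (hC : C ≤ LinearMap.eqLocus (g ∘ₗ A.subtype) f) (a : A) :
    ∃ g' : B →ₗ[R] M, C ⊔ R ∙ a ≤ LinearMap.eqLocus (g' ∘ₗ A.subtype) f := by
  let D := C.map A.subtype
  have htors : torsionOf R (B ⧸ D) (D.mkQ a) ≤ torsionOf R M (f a - g a) := by
    intro r hr
    rw [mem_torsionOf_iff, ← map_smul, mkQ_apply, Quotient.mk_eq_zero] at hr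
    obtain ⟨c, hc, hca⟩ := hr
    obtain rfl : c = r • a := Subtype.ext hca
    have hgf : g (r • a) = f (r • a) := hC hc
    rw [mem_torsionOf_iff, smul_sub, ← map_smul, ← map_smul, ← hgf, sub_self]
  obtain ⟨k, -, hk⟩ := hM.exists_factorsThroughFree_apply_eq hR htors
  refine ⟨g + k ∘ₗ D.mkQ, sup_le (fun c hc => ?_) ?_⟩
  · have : D.mkQ c = 0 := (Quotient.mk_eq_zero D).mpr (mem_map_of_mem hc)
    simpa [this] using hC hc
  · rw [span_le, Set.singleton_subset_iff]
    simp only [SetLike.mem_coe, LinearMap.mem_eqLocus, LinearMap.comp_apply, LinearMap.add_apply,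
      subtype_apply]
    rw [hk, add_sub_cancel]

theorem finitelyInjective (hR : Module.Baer R R) (hM : SinglyProjective R M) :
    FinitelyInjective.{u, v, w} R M := by
  intro B _ _ A hA f
  obtain ⟨s, hs⟩ := (Submodule.fg_top A).mpr hA
  have hext : ∀ t : Finset A, ∃ g : B →ₗ[R] M,
      span R t ≤ LinearMap.eqLocus (g ∘ₗ A.subtype) f := by
    classical
    intro t
    induction t using Finset.induction_on with
    | empty => exact ⟨0, by simp⟩
    | insert a t _ ih =>
      obtain ⟨g, hg⟩ := ih
      rw [Finset.coe_insert, span_insert, sup_comm]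
      exact hM.exists_le_eqLocus_sup_span_singleton hR f hg a
  obtain ⟨g, hg⟩ := hext s
  exact ⟨g, fun a => hg (hs ▸ mem_top)⟩

theorem locallyProjective (hR : Module.Baer R R) (hM : SinglyProjective R M) :
    LocallyProjective R M := by
  suffices hfix : ∀ s : Finset M, ∃ e : M →ₗ[R] M,
      e.FactorsThroughFree ∧ span R s ≤ LinearMap.eqLocus e LinearMap.id by
    rintro N ⟨s, rfl⟩
    obtain ⟨e, ⟨ι, φ, π, rfl⟩, he⟩ := hfix s
    exact ⟨ι, φ, π, fun x hx => he hx⟩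
  classical
  intro s
  induction s using Finset.induction_on with
  | empty => exact ⟨0, .zero, by simp⟩
  | insert y s _ ih =>
    obtain ⟨e, he, hes⟩ := ih
    obtain ⟨k, hk, hky⟩ := hM.exists_factorsThroughFree_apply_eq hR le_rfl (x := y - e y)
    refine ⟨e + k ∘ₗ (LinearMap.id - e), he.add (hk.comp _), ?_⟩
    rw [Finset.coe_insert, span_le]
    rintro x (rfl | hx)
    · simp [hky]
    · have : e x = x := hes (subset_span hx)
      simp [this]

end SinglyProjective

/-- if `R` is injective as a left module over itself, then every singly
projective left `R`-module is finitely injective and locally projective. -/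
theorem singlyProjective_finitelyInjective_locallyProjective_of_selfInjective
    (R : Type u) [Ring R] (hR : Module.Injective R R) (M : Type v) [AddCommGroup M]
    [Module R M] (hM : SinglyProjective R M) :
    FinitelyInjective.{u, v, w} R M ∧ LocallyProjective R M := by
  have hB : Module.Baer R R := Module.Baer.of_injective hR
  exact ⟨hM.finitelyInjective hB, hM.locallyProjective hB⟩
end

section
/- Let R be a local ring with maximal ideal P and let N be a flat left R-module. Assume N is generated by a family (x_i)_{i∈I} of elements such that the images (x_i + P·N)_{i∈I} form a basis of the (R/P)-vector space N/P·N. Then N is a free R-module. -/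
universe u v w

/-- A left `R`-module `M` over a (possibly noncommutative) ring is flat, expressed by the
standard equational criterion: every relation `∑ aᵢ • xᵢ = 0` trivializes. -/
def IsFlatModule (R : Type u) [Ring R] (M : Type v) [AddCommGroup M] [Module R M] : Prop :=
  ∀ (n : ℕ) (a : Fin n → R) (x : Fin n → M), (∑ i, a i • x i) = 0 →
    ∃ (m : ℕ) (b : Fin n → Fin m → R) (y : Fin m → M),
      (∀ j, (∑ i, a i * b i j) = 0) ∧ ∀ i, x i = ∑ j, b i j • y j

/-- For a local ring `R` whose maximal ideal `P` is the set of non-units, the submodule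
`P·N` of a left `R`-module `N`. -/
def maxIdealSMul (R : Type u) [Ring R] (N : Type v) [AddCommGroup N] [Module R N] :
    Submodule R N :=
  Submodule.span R {y : N | ∃ (p : R) (z : N), ¬IsUnit p ∧ y = p • z}

/-!
Linear independence of a finite subfamily `v₀, …, vₙ` goes by induction on `n`. Given a relation
`∑ aᵢ • vᵢ = 0`, flatness writes `vᵢ = ∑ⱼ bᵢⱼ • yⱼ` with `∑ᵢ aᵢ bᵢⱼ = 0` for all `j`. Since
`vₙ ∉ P·N`, some `bₙⱼ` is a unit, which expresses `aₙ` as `∑_{i<n} aᵢ cᵢ`. Then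
`∑_{i<n} aᵢ • (vᵢ + cᵢ • vₙ) = 0`, and the family `vᵢ + cᵢ • vₙ` is still independent modulo `P·N`,
so induction gives `aᵢ = 0` for `i < n`, hence also `aₙ = 0`. A spanning linearly independent
family is a basis.
-/

open Finsupp

section

variable {R : Type u} [Ring R] {N : Type v} [AddCommGroup N] [Module R N]

theorem smul_mem_maxIdealSMul {p : R} (hp : ¬IsUnit p) (z : N) : p • z ∈ maxIdealSMul R N :=
  Submodule.subset_span ⟨p, z, hp, rfl⟩

theorem exists_isUnit_of_sum_smul_notMem_maxIdealSMul {m : ℕ} {b : Fin m → R} {y : Fin m → N}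
    (h : ∑ j, b j • y j ∉ maxIdealSMul R N) : ∃ j, IsUnit (b j) := by
  by_contra! hb
  exact h (Submodule.sum_mem _ fun j _ => smul_mem_maxIdealSMul (hb j) (y j))

variable (R) in
/-- The images of `v` in `N/P·N` are linearly independent over `R/P`. -/
def LinearIndependentModMaxIdeal {κ : Type*} (v : κ → N) : Prop :=
  ∀ a : κ →₀ R, linearCombination R v a ∈ maxIdealSMul R N → ∀ i, ¬IsUnit (a i)

theorem linearIndependentModMaxIdeal_iff_fintype {κ : Type*} [Fintype κ] {v : κ → N} :
    LinearIndependentModMaxIdeal R v ↔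
      ∀ a : κ → R, ∑ i, a i • v i ∈ maxIdealSMul R N → ∀ i, ¬IsUnit (a i) := by
  refine (linearEquivFunOnFinite R R κ).forall_congr fun a => ?_
  simp [linearCombination_apply, sum_fintype]

namespace LinearIndependentModMaxIdeal

variable {κ : Type*} {v : κ → N}

theorem comp (hv : LinearIndependentModMaxIdeal R v) {κ' : Type*} (f : κ' → κ)
    (hf : Function.Injective f) : LinearIndependentModMaxIdeal R (v ∘ f) := by
  intro a ha i
  rw [← mapDomain_apply hf a i]
  exact hv _ (by rwa [linearCombination_comp] at ha) (f i)

theorem notMem_maxIdealSMul (hv : LinearIndependentModMaxIdeal R v) (i : κ) :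
    v i ∉ maxIdealSMul R N := fun h =>
  hv (single i 1) (by rwa [linearCombination_single, one_smul]) i (by simp)

end LinearIndependentModMaxIdeal

theorem sum_smul_add_smul_last {n : ℕ} (v : Fin (n + 1) → N) (c d : Fin n → R) :
    ∑ i, d i • (v i.castSucc + c i • v (Fin.last n)) =
      ∑ k, (Fin.snoc d (∑ i, d i * c i) : Fin (n + 1) → R) k • v k := by
  simp only [Fin.sum_univ_castSucc, Fin.snoc_castSucc, Fin.snoc_last, smul_add,
    Finset.sum_add_distrib, smul_smul, Finset.sum_smul]

theorem LinearIndependentModMaxIdeal.add_smul_last {n : ℕ} {v : Fin (n + 1) → N}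
    (hv : LinearIndependentModMaxIdeal R v) (c : Fin n → R) :
    LinearIndependentModMaxIdeal R fun i => v i.castSucc + c i • v (Fin.last n) := by
  rw [linearIndependentModMaxIdeal_iff_fintype] at hv ⊢
  intro d hd i
  have := hv _ (sum_smul_add_smul_last v c d ▸ hd) i.castSucc
  rwa [Fin.snoc_castSucc] at this

theorem last_eq_sum_mul_of_sum_mul_eq_zero {n : ℕ} {a b : Fin (n + 1) → R}
    (hb : IsUnit (b (Fin.last n))) (hab : ∑ k, a k * b k = 0) :
    a (Fin.last n) =
      ∑ i : Fin n, a i.castSucc * -(b i.castSucc * Ring.inverse (b (Fin.last n))) := by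
  rw [Fin.sum_univ_castSucc] at hab
  have hlast := eq_neg_of_add_eq_zero_right hab
  calc a (Fin.last n) = a (Fin.last n) * b (Fin.last n) * Ring.inverse (b (Fin.last n)) := by
        rw [mul_assoc, Ring.mul_inverse_cancel _ hb, mul_one]
    _ = _ := by
        rw [hlast]
        simp only [neg_mul, Finset.sum_mul, mul_neg, Finset.sum_neg_distrib, mul_assoc]

theorem IsFlatModule.linearIndependent_fin (hflat : IsFlatModule R N) {n : ℕ} {v : Fin n → N}
    (hv : LinearIndependentModMaxIdeal R v) : LinearIndependent R v := by
  induction n with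
  | zero => exact linearIndependent_empty_type
  | succ n ih =>
    rw [Fintype.linearIndependent_iff]
    intro a hav
    obtain ⟨m, b, y, hab, hvy⟩ := hflat _ a v hav
    obtain ⟨j, hj⟩ := exists_isUnit_of_sum_smul_notMem_maxIdealSMul
      (hvy (Fin.last n) ▸ hv.notMem_maxIdealSMul (Fin.last n))
    set c : Fin n → R := fun i => -(b i.castSucc j * Ring.inverse (b (Fin.last n) j))
    have hlast : a (Fin.last n) = ∑ i, Fin.init a i * c i :=
      last_eq_sum_mul_of_sum_mul_eq_zero hj (hab j)
    have hinit : Fin.init a = 0 := by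
      refine funext (Fintype.linearIndependent_iff.mp (ih (hv.add_smul_last c)) _ ?_)
      rw [sum_smul_add_smul_last, ← hlast, Fin.snoc_init_self, hav]
    refine Fin.lastCases ?_ (congrFun hinit)
    simp [hlast, hinit]

theorem IsFlatModule.linearIndependent (hflat : IsFlatModule R N) {ι : Type*} {v : ι → N}
    (hv : LinearIndependentModMaxIdeal R v) : LinearIndependent R v := by
  refine linearIndependent_iff_finset_linearIndependent.mpr fun s => ?_
  rw [← linearIndependent_equiv s.equivFin.symm]
  exact hflat.linearIndependent_fin
    (hv.comp _ (Subtype.val_injective.comp s.equivFin.symm.injective))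

end

theorem free_of_flat_basis_mod_maximalIdeal_general (R : Type u) [Ring R]
    (N : Type v) [AddCommGroup N] [Module R N] (hflat : IsFlatModule R N)
    (ι : Type w) (x : ι → N) (hgen : Submodule.span R (Set.range x) = ⊤)
    (hind : ∀ a : ι →₀ R, (a.sum fun i r => r • x i) ∈ maxIdealSMul R N →
      ∀ i, ¬IsUnit (a i)) :
    Module.Free R N :=
  Module.Free.of_basis (Module.Basis.mk (hflat.linearIndependent hind) hgen.ge)

/-- let `R` be a local ring with maximal ideal `P` (the set of non-units) and `N` a
flat left `R`-module generated by a family `(x i)` whose images form a basis of `N/P·N` over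
`R/P` (i.e. the family spans `N` and is linearly independent modulo `P·N`).  Then `N` is free. -/
theorem free_of_flat_basis_mod_maximalIdeal (R : Type u) [Ring R] [IsLocalRing R]
    (N : Type v) [AddCommGroup N] [Module R N] (hflat : IsFlatModule R N)
    (ι : Type w) (x : ι → N) (hgen : Submodule.span R (Set.range x) = ⊤)
    (hind : ∀ a : ι →₀ R, (a.sum fun i r => r • x i) ∈ maxIdealSMul R N →
      ∀ i, ¬IsUnit (a i)) :
    Module.Free R N :=
  free_of_flat_basis_mod_maximalIdeal_general R N hflat ι x hgen hind
end

section
/- Let R be a commutative ring whose total quotient ring Q is von Neumann regular. Then the following conditions are equivalent: (1) Q is a semisimple ring; (2) every flat R-module is finitely projective; (3) every flat R-module is singly projective. -/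
/-!
(1 ⇒ 2) Write a finitely generated submodule of a flat module `M` as the image of
`f : Rᵏ → M`. Over the semisimple ring `Q` the localized kernel of `f` is a direct summand;
clearing denominators in a projection onto it gives `L : Rᵏ → Rᵏ` with `f ∘ L = 0` and `L = s`
on `ker f` for a non-zero-divisor `s`. The equational criterion of flatness factors `f` through a
free module by a map `a` with `a ∘ L = 0`; since free modules are torsion-free, `a` kills
`ker f` and descends to the image of `f`.

(3 ⇒ 1) Over a von Neumann regular ring every ideal `I` is pure, so `Q ⧸ I` is `R`-flat.
Factoring `R ∙ 1 → Q ⧸ I` through a free module writes `1 = ∑ cᵢ • mᵢ` with every `cᵢ`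
annihilated by the annihilator of `1`; lifting the `mᵢ` gives `u ∈ Q` with `1 - u ∈ I` and
`I * u = 0`, so `I = (1 - u)`. A principal ideal of a von Neumann regular ring is generated by
an idempotent, hence is a direct summand.
-/

universe u

/-- `M` is finitely projective if for every finitely generated submodule `N` of `M` the
inclusion `N → M` factors through a free module. -/
def FinitelyProjective (R : Type u) [Ring R] (M : Type v) [AddCommGroup M] [Module R M] : Prop :=
  ∀ N : Submodule R M, N.FG → ∃ (ι : Type v) (φ : N →ₗ[R] (ι →₀ R))
    (π : (ι →₀ R) →ₗ[R] M), ∀ n : N, π (φ n) = (n : M)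

universe v

open LinearMap
open scoped nonZeroDivisors

section Factorization

variable {R : Type*} [CommRing R] {P M F : Type*} [AddCommGroup P] [Module R P]
  [AddCommGroup M] [Module R M] [AddCommGroup F] [Module R F]

theorem LinearMap.exists_comp_eq_subtype_range_of_ker_le {f : P →ₗ[R] M} {a : P →ₗ[R] F}
    {y : F →ₗ[R] M} (hya : f = y ∘ₗ a) (hker : ker f ≤ ker a) :
    ∃ φ : range f →ₗ[R] F, ∀ n : range f, y (φ n) = n := by
  refine ⟨(ker f).liftQ a hker ∘ₗ f.quotKerEquivRange.symm.toLinearMap, ?_⟩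
  intro n
  obtain ⟨p, hp⟩ := mem_range.1 n.2
  have hn : f.quotKerEquivRange.symm n = Submodule.Quotient.mk p :=
    f.quotKerEquivRange.symm_apply_eq.2 (Subtype.ext hp.symm)
  simp [hn, ← hp, hya]

theorem Module.Flat.exists_factorization_of_comp_eq_zero_of_eq_smul_on_ker [Module.Flat R M]
    [Module.Free R P] [Module.Finite R P] {f : P →ₗ[R] M} {L : P →ₗ[R] P} (hfL : f ∘ₗ L = 0)
    {s : R} (hs : s ∈ R⁰) (hL : ∀ x ∈ ker f, L x = s • x) :
    ∃ (n : ℕ) (a : P →ₗ[R] (Fin n →₀ R)) (y : (Fin n →₀ R) →ₗ[R] M),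
      f = y ∘ₗ a ∧ ker f ≤ ker a := by
  obtain ⟨n, a, y, hya, haL⟩ := Module.Flat.exists_factorization_of_comp_eq_zero_of_free hfL
  refine ⟨n, a, y, hya, fun x hx => ?_⟩
  have : s • a x = 0 := by rw [← map_smul, ← hL x hx]; exact congr($haL x)
  exact Module.Flat.isSMulRegular_of_nonZeroDivisors hs (by simpa using this)

theorem exists_comp_eq_zero_and_eq_smul_on_ker [IsSemisimpleRing (FractionRing R)]
    [Module.Flat R M] [Module.FinitePresentation R P] [Module.Flat R P] (f : P →ₗ[R] M) :
    ∃ (L : P →ₗ[R] P) (s : R), s ∈ R⁰ ∧ f ∘ₗ L = 0 ∧ ∀ x ∈ ker f, L x = s • x := by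
  let ρ := LocalizedModule.mkLinearMap R⁰ P
  let K := (ker f).localized' (Localization R⁰) R⁰ ρ
  obtain ⟨W, hKW⟩ := exists_isCompl K
  let E := K.projection W hKW
  obtain ⟨L, s, hL⟩ :=
    Module.FinitePresentation.exists_lift_of_isLocalizedModule R⁰ ρ (E.restrictScalars R ∘ₗ ρ)
  have hρL (x : P) : ρ (L x) = (s : R) • E (ρ x) := congr($hL x)
  refine ⟨L, s, s.2, ?_, fun x hx => ?_⟩
  · ext x
    have hLx : ρ (L x) ∈ K := by
      rw [hρL]; exact K.smul_of_tower_mem _ (Submodule.projection_apply_mem _ _)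
    obtain ⟨m, hm, t, hmt⟩ := (Submodule.mem_localized' _ _ _ _ _).1 hLx
    have hρm : ρ m = ρ ((t : R) • L x) := by
      rw [map_smul, ← Submonoid.smul_def]; exact IsLocalizedModule.mk'_eq_iff.1 hmt
    obtain ⟨c, hc⟩ := (IsLocalizedModule.eq_iff_exists R⁰ ρ).1 hρm
    have : ((c * t : R⁰) : R) • f (L x) = 0 := by
      rw [Submonoid.coe_mul, mul_smul, ← map_smul, ← map_smul, ← Submonoid.smul_def, ← hc,
        Submonoid.smul_def, map_smul, mem_ker.1 hm, smul_zero]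
    exact Module.Flat.isSMulRegular_of_nonZeroDivisors (c * t).2 (by simpa using this)
  · have hρx : ρ x ∈ K := ⟨x, hx, 1, IsLocalizedModule.mk'_one _ _ _⟩
    obtain ⟨c, hc⟩ := (IsLocalizedModule.eq_iff_exists R⁰ ρ).1 <| calc
      ρ (L x) = (s : R) • ρ x := by rw [hρL, Submodule.projection_apply_left hKW ⟨_, hρx⟩]
      _ = ρ ((s : R) • x) := (map_smul ρ _ x).symm
    exact Module.Flat.isSMulRegular_of_nonZeroDivisors c.2 hc

end Factorization

theorem finitelyProjective_of_isSemisimpleRing_fractionRing {R : Type u} [CommRing R]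
    [IsSemisimpleRing (FractionRing R)] (M : Type v) [AddCommGroup M] [Module R M]
    [Module.Flat R M] : FinitelyProjective R M := by
  intro N hN
  obtain ⟨k, f, rfl⟩ := (Submodule.fg_iff_exists_fin_linearMap R M).1 hN
  obtain ⟨L, s, hs, hfL, hL⟩ := exists_comp_eq_zero_and_eq_smul_on_ker f
  obtain ⟨n, a, y, hya, hker⟩ :=
    Module.Flat.exists_factorization_of_comp_eq_zero_of_eq_smul_on_ker hfL hs hL
  let e : (Fin n →₀ R) ≃ₗ[R] (ULift.{v} (Fin n) →₀ R) := Finsupp.domLCongr Equiv.ulift.symm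
  have hfac : f = (y ∘ₗ e.symm.toLinearMap) ∘ₗ (e.toLinearMap ∘ₗ a) := by
    rw [hya]; ext; simp
  have hker' : ker f ≤ ker (e.toLinearMap ∘ₗ a) := hker.trans (ker_le_ker_comp a _)
  obtain ⟨φ, hφ⟩ := exists_comp_eq_subtype_range_of_ker_le hfac hker'
  exact ⟨_, φ, _, hφ⟩

theorem FinitelyProjective.singlyProjective {R : Type u} [Ring R] {M : Type v} [AddCommGroup M]
    [Module R M] (h : FinitelyProjective R M) : SinglyProjective R M :=
  fun x => h _ (Submodule.fg_span_singleton x)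

def IsVonNeumannRegularRing (Q : Type*) [Mul Q] : Prop :=
  ∀ a : Q, ∃ b, a * b * a = a

namespace IsVonNeumannRegularRing

variable {Q : Type*} [CommRing Q] (hQ : IsVonNeumannRegularRing Q)
include hQ

theorem inf_eq_mul (I J : Ideal Q) : I ⊓ J = I * J := by
  refine le_antisymm (fun x ⟨hxI, hxJ⟩ => ?_) Ideal.mul_le_inf
  obtain ⟨b, hb⟩ := hQ x
  rw [← hb, mul_assoc]
  exact Ideal.mul_mem_mul hxI (J.mul_mem_left b hxJ)

theorem pure (I : Ideal Q) : I.Pure :=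
  Ideal.Pure.of_inf_eq_mul I fun J _ => hQ.inf_eq_mul I J

theorem exists_isIdempotentElem_span_eq (a : Q) :
    ∃ e : Q, IsIdempotentElem e ∧ Ideal.span {a} = Ideal.span {e} := by
  obtain ⟨b, hb⟩ := hQ a
  refine ⟨a * b, by rw [IsIdempotentElem, ← mul_assoc, hb], le_antisymm ?_ ?_⟩
  · rw [Ideal.span_singleton_le_span_singleton]
    exact ⟨a, hb.symm⟩
  · rw [Ideal.span_singleton_le_span_singleton]
    exact dvd_mul_right a b

theorem isSemisimpleRing [IsPrincipalIdealRing Q] : IsSemisimpleRing Q := by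
  refine (isSemisimpleModule_iff Q Q).2 ⟨fun I => ?_⟩
  obtain ⟨a, rfl⟩ := Submodule.IsPrincipal.principal I
  obtain ⟨e, he, hae⟩ := hQ.exists_isIdempotentElem_span_eq a
  have hcompl := (toSpanSingleton_isIdempotentElem_iff.2 he).isCompl
  rw [range_toSpanSingleton, he.ker_toSpanSingleton_eq_span] at hcompl
  rw [Ideal.submodule_span_eq, hae]
  exact ⟨_, hcompl⟩

end IsVonNeumannRegularRing

theorem SinglyProjective.exists_linearCombination_eq {R : Type u} [Ring R] {M : Type v}
    [AddCommGroup M] [Module R M] (h : SinglyProjective R M) (x : M) :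
    ∃ (ι : Type v) (c : ι →₀ R) (m : ι → M),
      Finsupp.linearCombination R m c = x ∧ ∀ r : R, r • x = 0 → r • c = 0 := by
  obtain ⟨ι, φ, π, hπ⟩ := h x
  let x' : Submodule.span R {x} := ⟨x, Submodule.mem_span_singleton_self x⟩
  refine ⟨ι, φ x', fun i => π (Finsupp.single i 1), ?_, fun r hr => ?_⟩
  · have : Finsupp.linearCombination R (fun i => π (Finsupp.single i 1)) = π := by ext; simp
    rw [this, hπ]
  · rw [← map_smul, show r • x' = 0 from Subtype.ext hr, map_zero]

theorem Ideal.isPrincipal_of_singlyProjective_quotient {R Q : Type*} [CommRing R] [CommRing Q]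
    [Algebra R Q] [IsFractionRing R Q] (I : Ideal Q) (h : SinglyProjective R (Q ⧸ I)) :
    I.IsPrincipal := by
  obtain ⟨ι, c, m, hcm, hann⟩ := h.exists_linearCombination_eq (Ideal.Quotient.mk I 1)
  choose q hq using fun i => Ideal.Quotient.mk_surjective (m i)
  let u : Q := Finsupp.linearCombination R q c
  have hu : Ideal.Quotient.mk I u = Ideal.Quotient.mk I 1 := by
    rw [← hcm, ← funext hq]
    exact Finsupp.apply_linearCombination R (Ideal.Quotient.mkₐ R I).toLinearMap q c
  have hIu (t : Q) (ht : t ∈ I) : t * u = 0 := by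
    obtain ⟨⟨r, s⟩, hts⟩ := IsLocalization.surj R⁰ t
    dsimp only at hts
    have hr : r • Ideal.Quotient.mk I 1 = 0 := by
      rw [← Ideal.Quotient.mkₐ_eq_mk R, ← map_smul, Algebra.smul_def, mul_one,
        Ideal.Quotient.mkₐ_eq_mk, Ideal.Quotient.eq_zero_iff_mem, ← hts]
      exact I.mul_mem_right _ ht
    have hru : algebraMap R Q r * u = 0 := by
      rw [← Algebra.smul_def, ← map_smul, hann r hr, map_zero]
    have : algebraMap R Q s * (t * u) = 0 := by
      rw [← mul_assoc, mul_comm _ t, hts, hru]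
    exact (IsLocalization.map_units Q s).mul_right_eq_zero.1 this
  refine ⟨1 - u, le_antisymm (fun t ht => ?_) ?_⟩
  · exact Ideal.mem_span_singleton'.2 ⟨t, by linear_combination -hIu t ht⟩
  · rw [Submodule.span_le, Set.singleton_subset_iff, SetLike.mem_coe,
      ← Ideal.Quotient.eq_zero_iff_mem, map_sub, hu, sub_self]

theorem IsVonNeumannRegularRing.isSemisimpleRing_of_forall_flat_singlyProjective {R : Type u}
    {Q : Type v} [CommRing R] [CommRing Q] [Algebra R Q] [IsFractionRing R Q]
    (hQ : IsVonNeumannRegularRing Q)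
    (h : ∀ (M : Type v) [AddCommGroup M] [Module R M], Module.Flat R M → SinglyProjective R M) :
    IsSemisimpleRing Q := by
  have : IsPrincipalIdealRing Q := ⟨fun I => by
    have := hQ.pure I
    have := IsLocalization.flat Q R⁰
    exact I.isPrincipal_of_singlyProjective_quotient (h _ (Module.Flat.trans R Q (Q ⧸ I)))⟩
  exact hQ.isSemisimpleRing

/-- let `R` be a commutative ring whose total quotient ring `Q` is von Neumann
regular.  The following are equivalent: (1) `Q` is semisimple; (2) every flat `R`-module is
finitely projective; (3) every flat `R`-module is singly projective. -/
theorem semisimple_iff_flat_finitelyProjective_iff_flat_singlyProjective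
    (R : Type u) [CommRing R] (hQ : ∀ a : FractionRing R, ∃ b, a * b * a = a) :
    (IsSemisimpleRing (FractionRing R) ↔
      (∀ (M : Type u) [AddCommGroup M] [Module R M],
        Module.Flat R M → FinitelyProjective R M)) ∧
    ((∀ (M : Type u) [AddCommGroup M] [Module R M],
        Module.Flat R M → FinitelyProjective R M) ↔
      (∀ (M : Type u) [AddCommGroup M] [Module R M],
        Module.Flat R M → SinglyProjective R M)) := by
  have semisimple_finitely : IsSemisimpleRing (FractionRing R) →
      ∀ (M : Type u) [AddCommGroup M] [Module R M], Module.Flat R M → FinitelyProjective R M :=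
    fun _ M _ _ _ => finitelyProjective_of_isSemisimpleRing_fractionRing M
  have finitely_singly : (∀ (M : Type u) [AddCommGroup M] [Module R M],
      Module.Flat R M → FinitelyProjective R M) →
      ∀ (M : Type u) [AddCommGroup M] [Module R M], Module.Flat R M → SinglyProjective R M :=
    fun h M _ _ hM => (h M hM).singlyProjective
  have singly_semisimple := IsVonNeumannRegularRing.isSemisimpleRing_of_forall_flat_singlyProjective
    (R := R) hQ
  exact ⟨⟨semisimple_finitely, fun h => singly_semisimple (finitely_singly h)⟩,
    ⟨finitely_singly, fun h => semisimple_finitely (singly_semisimple h)⟩⟩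
end

section
/- Let R be a commutative ring. Then the following conditions are equivalent: (1) R is π-coherent, i.e. for every index set Λ every finitely generated submodule of the R-module R^Λ is finitely presented; (2) for every index set Λ, the R-module R^Λ is finitely projective; (3) every product of finitely projective R-modules is finitely projective. -/
universe u

/-- `R` is π-coherent if for every index set `Λ` every finitely generated submodule of `R^Λ`
is finitely presented. -/
def PiCoherent (R : Type u) [CommRing R] : Prop :=
  ∀ (Λ : Type u) (N : Submodule R (Λ → R)), N.FG → Module.FinitePresentation R N

/-!
For a finitely generated `N ≤ R^Λ`, the inclusion factors through some `R^k` exactly when the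
coordinate functionals of `N` lie in a finitely generated submodule of `Dual R N`.

(1) ⇒ (2): for a surjection `p : R^n → N`, `Dual R N` is the annihilator of `K = ker p` in
`Dual R R^n`, i.e. the kernel of the restriction map `Dual R R^n → R^K`; π-coherence makes this
kernel, hence `Dual R N`, finitely generated.

(2) ⇒ (1): for `K = ker (f : R^n → R^Λ)`, apply (2) to the image `Z` of `Dual R R^n → R^K`. The
finitely many functionals on `Z` spanning its coordinates pull back, through
`R^n ≅ Dual R (Dual R R^n)`, to vectors spanning `K`. They lie in `K` because `K` is cut out by
the coordinates of `f`, which are killed by `Dual R R^n → R^K`.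

(2) ⇒ (3): a finitely generated `N ≤ ∏ Mᵢ` maps to `∏ R^{kᵢ} = R^{Σ kᵢ}` through factorizations
of its projections, and (2) is applied to the image of `N` there.
-/

open Module

universe v w

namespace Submodule

variable {R : Type u} [Ring R] {M : Type*} [AddCommGroup M] [Module R M]

def FactorsThroughFinFree (N : Submodule R M) : Prop :=
  ∃ (k : ℕ) (φ : N →ₗ[R] (Fin k → R)) (π : (Fin k → R) →ₗ[R] M), π ∘ₗ φ = N.subtype

theorem FactorsThroughFinFree.of_finite {N : Submodule R M} {κ : Type*} [Finite κ]
    (φ : N →ₗ[R] (κ → R)) (π : (κ → R) →ₗ[R] M) (h : π ∘ₗ φ = N.subtype) :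
    N.FactorsThroughFinFree := by
  let e := LinearEquiv.funCongrLeft R R (Finite.equivFin κ)
  refine ⟨_, e.symm ∘ₗ φ, π ∘ₗ e.toLinearMap, ?_⟩
  ext n
  simp [← h]

theorem FactorsThroughFinFree.of_comp {N : Submodule R M} {P : Type*} [AddCommGroup P]
    [Module R P] (E : N →ₗ[R] P) (g : P →ₗ[R] M) (h : g ∘ₗ E = N.subtype)
    (hE : (LinearMap.range E).FactorsThroughFinFree) : N.FactorsThroughFinFree := by
  obtain ⟨k, φ, π, hπ⟩ := hE
  refine ⟨k, φ ∘ₗ E.rangeRestrict, g ∘ₗ π, ?_⟩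
  ext n
  rw [← h, LinearMap.comp_apply, LinearMap.comp_apply, LinearMap.comp_apply]
  exact congr(g ($hπ (E.rangeRestrict n)))

end Submodule

section Ring

variable {R : Type u} [Ring R] {M : Type v} [AddCommGroup M] [Module R M]

theorem finitelyProjective_iff_forall_fg_factorsThroughFinFree :
    FinitelyProjective R M ↔ ∀ N : Submodule R M, N.FG → N.FactorsThroughFinFree := by
  constructor
  · classical
    intro hM N hN
    obtain ⟨ι, φ, π, hφπ⟩ := hM N hN
    have := Module.Finite.iff_fg.mpr hN
    obtain ⟨n, g, hg⟩ := Module.Finite.exists_fin (R := R) (M := N)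
    let T : Finset ι := Finset.univ.biUnion fun j => (φ (g j)).support
    have hT : LinearMap.range φ ≤ Finsupp.supported R R (T : Set ι) := by
      rw [LinearMap.range_eq_map, ← hg, Submodule.map_span, Submodule.span_le]
      rintro _ ⟨_, ⟨j, rfl⟩, rfl⟩
      exact Finset.coe_subset.mpr
        (Finset.subset_biUnion_of_mem (fun j => (φ (g j)).support) (Finset.mem_univ j))
    let e := (Finsupp.supportedEquivFinsupp (M := R) (R := R) (T : Set ι)).trans
      (Finsupp.linearEquivFunOnFinite R R _)
    refine .of_finite (e.toLinearMap ∘ₗ φ.codRestrict _ fun x => hT ⟨x, rfl⟩)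
      (π ∘ₗ (Finsupp.supported R R (T : Set ι)).subtype ∘ₗ e.symm.toLinearMap) ?_
    ext x
    simp [hφπ]
  · intro hM N hN
    obtain ⟨k, φ, π, hφπ⟩ := hM N hN
    let e : (ULift.{v} (Fin k) →₀ R) ≃ₗ[R] (Fin k → R) :=
      (Finsupp.domLCongr Equiv.ulift).trans (Finsupp.linearEquivFunOnFinite R R (Fin k))
    exact ⟨ULift (Fin k), e.symm.toLinearMap ∘ₗ φ, π ∘ₗ e.toLinearMap,
      fun n => by simpa using congr($hφπ n)⟩

theorem FinitelyProjective.of_free [Module.Free R M] : FinitelyProjective R M := by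
  let b := Module.Free.chooseBasis R M
  exact fun N _ => ⟨_, b.repr.toLinearMap ∘ₗ N.subtype, b.repr.symm.toLinearMap, by simp⟩

end Ring

section CommRing

variable {R : Type u} [CommRing R]

namespace Submodule

variable {P : Type*} [AddCommGroup P] [Module R P]

def dualRestrictFun (K : Submodule R P) : Dual R P →ₗ[R] (K → R) :=
  LinearMap.pi fun w => Dual.eval R P w

theorem ker_dualRestrictFun (K : Submodule R P) :
    LinearMap.ker K.dualRestrictFun = K.dualAnnihilator := by
  ext g
  simp [dualRestrictFun, mem_dualAnnihilator, funext_iff]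

theorem factorsThroughFinFree_iff_exists_fg_coord_mem {Λ : Type*} (N : Submodule R (Λ → R)) :
    N.FactorsThroughFinFree ↔
      ∃ U : Submodule R (Dual R N), U.FG ∧ ∀ l, LinearMap.proj l ∘ₗ N.subtype ∈ U := by
  constructor
  · rintro ⟨k, φ, π, hφπ⟩
    refine ⟨LinearMap.range φ.dualMap, fg_range _, fun l => ⟨LinearMap.proj l ∘ₗ π, ?_⟩⟩
    rw [LinearMap.dualMap_apply', LinearMap.comp_assoc, hφπ]
  · rintro ⟨U, hU, hcoord⟩
    obtain ⟨k, u, rfl⟩ := fg_iff_exists_fin_generating_family.mp hU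
    choose c hc using fun l => (mem_span_range_iff_exists_fun R).mp (hcoord l)
    refine ⟨k, LinearMap.pi u, (Matrix.of c).mulVecLin, ?_⟩
    ext n l
    simpa [Matrix.mulVec, dotProduct] using congr($(hc l) n)

end Submodule

theorem PiCoherent.fg_ker (h : PiCoherent R) {P : Type*} [AddCommGroup P] [Module R P]
    [Module.Finite R P] {Λ : Type u} (f : P →ₗ[R] (Λ → R)) : (LinearMap.ker f).FG := by
  have := h Λ _ (Submodule.fg_range f)
  rw [← LinearMap.ker_rangeRestrict]
  exact FinitePresentation.fg_ker _ f.surjective_rangeRestrict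

theorem PiCoherent.of_fg_ker
    (h : ∀ (n : ℕ) (Λ : Type u) (f : (Fin n → R) →ₗ[R] (Λ → R)), (LinearMap.ker f).FG) :
    PiCoherent R := by
  intro Λ N hN
  have := Module.Finite.iff_fg.mpr hN
  obtain ⟨n, p, hp⟩ := Module.Finite.exists_fin' R N
  refine finitePresentation_of_surjective p hp ?_
  simpa [LinearMap.ker_comp] using h n Λ (N.subtype ∘ₗ p)

theorem PiCoherent.finite_dual (h : PiCoherent R) (N : Type*) [AddCommGroup N] [Module R N]
    [Module.Finite R N] : Module.Finite R (Dual R N) := by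
  obtain ⟨n, p, hp⟩ := Module.Finite.exists_fin' R N
  have hfg := h.fg_ker (LinearMap.ker p).dualRestrictFun
  rw [Submodule.ker_dualRestrictFun,
    ← LinearMap.range_dualMap_eq_dualAnnihilator_ker_of_surjective p hp] at hfg
  have := Module.Finite.iff_fg.mpr hfg
  exact Module.Finite.equiv
    (LinearEquiv.ofInjective _ (LinearMap.dualMap_injective_of_surjective hp)).symm

theorem finitelyProjective_pi_of_piCoherent (h : PiCoherent R) (Λ : Type*) :
    FinitelyProjective R (Λ → R) := by
  refine finitelyProjective_iff_forall_fg_factorsThroughFinFree.mpr fun N hN => ?_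
  have := Module.Finite.iff_fg.mpr hN
  have := h.finite_dual N
  exact N.factorsThroughFinFree_iff_exists_fg_coord_mem.mpr
    ⟨⊤, Module.Finite.fg_top, fun _ => Submodule.mem_top⟩

theorem fg_ker_of_finitelyProjective {P : Type u} [AddCommGroup P] [Module R P] [Module.Free R P]
    [Module.Finite R P] {Λ : Type*} (f : P →ₗ[R] (Λ → R))
    (h : FinitelyProjective R (LinearMap.ker f → R)) : (LinearMap.ker f).FG := by
  set K := LinearMap.ker f
  let r := K.dualRestrictFun
  obtain ⟨U, hU, hcoord⟩ := (LinearMap.range r).factorsThroughFinFree_iff_exists_fg_coord_mem.mp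
    (finitelyProjective_iff_forall_fg_factorsThroughFinFree.mp h _ (Submodule.fg_range r))
  let T : Dual R (LinearMap.range r) →ₗ[R] P :=
    (evalEquiv R P).symm.toLinearMap ∘ₗ r.rangeRestrict.dualMap
  have hTK : LinearMap.range T ≤ K := by
    rintro _ ⟨u, rfl⟩
    refine LinearMap.mem_ker.mpr (funext fun l => ?_)
    have hr : r.rangeRestrict (LinearMap.proj l ∘ₗ f) = 0 :=
      Subtype.ext (funext fun w => congr_fun w.2 l)
    have := apply_evalEquiv_symm_apply R P (LinearMap.proj l ∘ₗ f) (r.rangeRestrict.dualMap u)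
    rwa [LinearMap.dualMap_apply, hr, map_zero] at this
  have hKT : K ≤ U.map T := by
    intro w hw
    refine ⟨_, hcoord ⟨w, hw⟩, (LinearEquiv.symm_apply_eq _).mpr ?_⟩
    ext g
    rfl
  rw [le_antisymm hKT (LinearMap.map_le_range.trans hTK)]
  exact hU.map T

theorem piCoherent_of_finitelyProjective_pi (h : ∀ Λ : Type u, FinitelyProjective R (Λ → R)) :
    PiCoherent R :=
  PiCoherent.of_fg_ker fun _ _ f => fg_ker_of_finitelyProjective f (h _)

end CommRing

theorem FinitelyProjective.pi {R : Type u} [Ring R] {Λ : Type w}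
    (h : ∀ Γ : Type w, FinitelyProjective R (Γ → R)) {M : Λ → Type v}
    [∀ i, AddCommGroup (M i)] [∀ i, Module R (M i)] (hM : ∀ i, FinitelyProjective R (M i)) :
    FinitelyProjective R (∀ i, M i) := by
  refine finitelyProjective_iff_forall_fg_factorsThroughFinFree.mpr fun N hN => ?_
  choose k φ π hφπ using fun i => finitelyProjective_iff_forall_fg_factorsThroughFinFree.mp
    (hM i) _ (hN.map (LinearMap.proj i))
  let e := LinearEquiv.piCurry R fun (i : Λ) (_ : Fin (k i)) => R
  let E : N →ₗ[R] ((Σ i, Fin (k i)) → R) :=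
    e.symm.toLinearMap ∘ₗ LinearMap.pi fun i => φ i ∘ₗ (LinearMap.proj i).submoduleMap N
  let g : ((Σ i, Fin (k i)) → R) →ₗ[R] ∀ i, M i :=
    LinearMap.pi (fun i => π i ∘ₗ LinearMap.proj i) ∘ₗ e.toLinearMap
  have := Module.Finite.iff_fg.mpr hN
  refine .of_comp E g ?_ <| finitelyProjective_iff_forall_fg_factorsThroughFinFree.mp (h _) _
    (Submodule.fg_range E)
  ext n i
  simpa [E, g] using congr($(hφπ i) ((LinearMap.proj i).submoduleMap N n))

/-- for a commutative ring `R` the following are equivalent: (1) `R` is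
π-coherent; (2) `R^Λ` is finitely projective for every index set `Λ`; (3) every product of
finitely projective `R`-modules is finitely projective. -/
theorem piCoherent_iff_pow_finitelyProjective_iff_prod_finitelyProjective
    (R : Type u) [CommRing R] :
    (PiCoherent R ↔ ∀ Λ : Type u, FinitelyProjective R (Λ → R)) ∧
    ((∀ Λ : Type u, FinitelyProjective R (Λ → R)) ↔
      (∀ (Λ : Type u) (M : Λ → Type u) [∀ i, AddCommGroup (M i)] [∀ i, Module R (M i)],
        (∀ i, FinitelyProjective R (M i)) → FinitelyProjective R (∀ i, M i))) :=
  ⟨⟨fun h => finitelyProjective_pi_of_piCoherent h, piCoherent_of_finitelyProjective_pi⟩,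
    fun h _ _ _ _ => FinitelyProjective.pi h, fun h Λ => h Λ _ fun _ => .of_free⟩
end

section
/- Let R be a commutative von Neumann regular ring. Then the following conditions are equivalent: (1) every product of singly projective R-modules is singly projective; (2) the R-module R^R (the product of R copies of R) is singly projective; (3) R is a Baer ring; (4) the intersection of every family of finitely generated ideals of R is finitely generated; (5) for every cyclic R-module C, the module Hom_R(C,R) is finitely generated; (6) the prime spectrum Spec R with the Zariski topology is extremally disconnected. -/
universe u

/-- A commutative ring `R` is a Baer ring if for every subset `A` of `R` the annihilator
`(0 : A)` is generated by an idempotent. -/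
def IsBaerRing (R : Type u) [CommRing R] : Prop :=
  ∀ A : Set R, ∃ e : R, IsIdempotentElem e ∧
    {r : R | ∀ a ∈ A, r * a = 0} = (Ideal.span {e} : Set R)

/-!
Over a von Neumann regular ring every finitely generated ideal, and the annihilator of one, is
generated by an idempotent. So all six conditions become statements about annihilators: a module
is singly projective iff every element has an annihilator generated by an idempotent; an element of
a product is annihilated by the intersection of the annihilators of its components;
`Hom(R ∙ c, R) ≅ ann (ann c)`; the intersection of the ideals `(e i)` is the annihilator of the
`1 - e i`; and in a reduced ring the closure of `D(I)` is `V(ann I)`, which is clopen iff `ann I`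
is generated by an idempotent.
-/

def IsVonNeumannRegular (R : Type*) [CommRing R] : Prop :=
  ∀ a : R, ∃ b : R, a * b * a = a

def Ideal.IsGeneratedByIdempotent {R : Type*} [CommRing R] (I : Ideal R) : Prop :=
  ∃ e : R, IsIdempotentElem e ∧ I = Ideal.span {e}

section

variable {R : Type*} [CommRing R]

theorem IsIdempotentElem.annihilator_span_singleton {e : R} (he : IsIdempotentElem e) :
    (Ideal.span {e}).annihilator = Ideal.span {1 - e} := by
  rw [Ideal.span, Submodule.annihilator_span_singleton, he.ker_toSpanSingleton_eq_span]

namespace Ideal.IsGeneratedByIdempotent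

variable {I : Ideal R}

theorem fg (hI : I.IsGeneratedByIdempotent) : I.FG := by
  obtain ⟨e, -, rfl⟩ := hI
  exact ⟨{e}, by simp⟩

theorem annihilator (hI : I.IsGeneratedByIdempotent) : I.annihilator.IsGeneratedByIdempotent := by
  obtain ⟨e, he, rfl⟩ := hI
  exact ⟨1 - e, he.one_sub, he.annihilator_span_singleton⟩

theorem exists_eq_annihilator (hI : I.IsGeneratedByIdempotent) :
    ∃ f : R, I = (Ideal.span {f}).annihilator := by
  obtain ⟨e, he, rfl⟩ := hI
  exact ⟨1 - e, by rw [he.one_sub.annihilator_span_singleton, sub_sub_cancel]⟩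

end Ideal.IsGeneratedByIdempotent

theorem isBaerRing_iff : IsBaerRing R ↔ ∀ I : Ideal R, I.annihilator.IsGeneratedByIdempotent := by
  have hann (A : Set R) : ((Ideal.span A).annihilator : Set R) = {r | ∀ a ∈ A, r * a = 0} := by
    ext r
    simp [Submodule.mem_annihilator_span]
  refine ⟨fun h I => ?_, fun h A => ?_⟩
  · obtain ⟨e, he, hA⟩ := h I
    refine ⟨e, he, SetLike.coe_injective ?_⟩
    rw [← hA, ← hann, Ideal.span_eq]
  · obtain ⟨e, he, hA⟩ := h (Ideal.span A)
    exact ⟨e, he, by rw [← hann, hA]⟩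

theorem IsBaerRing.isGeneratedByIdempotent_iInf (hB : IsBaerRing R) {ι : Sort*}
    {I : ι → Ideal R} (hI : ∀ i, (I i).IsGeneratedByIdempotent) :
    (⨅ i, I i).IsGeneratedByIdempotent := by
  choose f hf using fun i => (hI i).exists_eq_annihilator
  simp_rw [hf, ← Submodule.annihilator_iSup]
  exact isBaerRing_iff.mp hB _

namespace IsVonNeumannRegular

variable (hR : IsVonNeumannRegular R)
include hR

theorem isIdempotentElem (I : Ideal R) : IsIdempotentElem I := by
  refine le_antisymm Ideal.mul_le_right fun a ha => ?_
  obtain ⟨b, hb⟩ := hR a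
  rw [← hb, mul_assoc]
  exact Ideal.mul_mem_mul ha (I.mul_mem_left b ha)

theorem isRadical (I : Ideal R) : I.IsRadical := by
  refine (Ideal.isRadical_iff_pow_one_lt 2 one_lt_two).mpr fun a ha => ?_
  obtain ⟨b, hb⟩ := hR a
  rw [← hb, mul_right_comm, ← sq]
  exact I.mul_mem_right b ha

theorem isReduced : IsReduced R :=
  Ideal.isRadical_bot_iff.mp (hR.isRadical ⊥)

theorem isGeneratedByIdempotent_of_fg {I : Ideal R} (hI : I.FG) : I.IsGeneratedByIdempotent :=
  (Ideal.isIdempotentElem_iff_of_fg I hI).mp (hR.isIdempotentElem I)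

theorem annihilator_isGeneratedByIdempotent_of_fg {I : Ideal R} (hI : I.FG) :
    I.annihilator.IsGeneratedByIdempotent :=
  (hR.isGeneratedByIdempotent_of_fg hI).annihilator

end IsVonNeumannRegular

end

section Annihilators

variable {R : Type*} [CommRing R]

theorem Submodule.annihilator_eq_iInf_annihilator_span_singleton {M : Type*} [AddCommGroup M]
    [Module R M] (N : Submodule R M) : N.annihilator = ⨅ x : N, (R ∙ (x : M)).annihilator := by
  ext r
  simp [Submodule.mem_annihilator]

theorem annihilator_span_singleton_pi {ι : Type*} {M : ι → Type*} [∀ i, AddCommGroup (M i)]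
    [∀ i, Module R (M i)] (x : ∀ i, M i) :
    (R ∙ x).annihilator = ⨅ i, (R ∙ x i).annihilator := by
  ext r
  simp [funext_iff]

theorem annihilator_span_singleton_indicator (I : Ideal R) :
    (R ∙ (I : Set R).indicator id).annihilator = I.annihilator := by
  ext r
  rw [Submodule.mem_annihilator_span_singleton, Submodule.mem_annihilator]
  simp only [funext_iff, Pi.smul_apply, Pi.zero_apply, smul_eq_mul]
  refine forall_congr' fun s => ?_
  by_cases hs : s ∈ I <;> simp [hs]

end Annihilators

section Modules

variable {R : Type*} [CommRing R]

theorem exists_linearMap_span_singleton_apply {M N : Type*} [AddCommGroup M] [Module R M]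
    [AddCommGroup N] [Module R N] (x : M) (y : N)
    (h : (R ∙ x).annihilator ≤ (R ∙ y).annihilator) :
    ∃ g : (R ∙ x) →ₗ[R] N, g ⟨x, Submodule.mem_span_singleton_self x⟩ = y := by
  rw [Ideal.annihilator_span_singleton_eq_torsionOf, Submodule.annihilator_span_singleton] at h
  refine ⟨Submodule.liftQ _ _ h ∘ₗ (Ideal.quotTorsionOfEquivSpanSingleton R M x).symm, ?_⟩
  have hx : Ideal.quotTorsionOfEquivSpanSingleton R M x (Submodule.Quotient.mk 1) =
      ⟨x, Submodule.mem_span_singleton_self x⟩ := by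
    rw [Ideal.quotTorsionOfEquivSpanSingleton_apply_mk, one_smul]
  rw [LinearMap.comp_apply, LinearEquiv.coe_coe, ← hx, LinearEquiv.symm_apply_apply,
    Submodule.liftQ_apply, LinearMap.toSpanSingleton_apply, one_smul]

theorem singlyProjective_of_annihilator {M : Type*} [AddCommGroup M] [Module R M]
    (h : ∀ x : M, (R ∙ x).annihilator.IsGeneratedByIdempotent) : SinglyProjective R M := by
  intro x
  obtain ⟨e, he, hx⟩ := h x
  -- `R ∙ x ≅ R ⧸ (e) ≅ R (1 - e)` is a direct summand of `R`
  obtain ⟨g, hg⟩ := exists_linearMap_span_singleton_apply x (1 - e) (by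
    rw [hx, Ideal.span, Submodule.annihilator_span_singleton,
      he.ker_toSpanSingleton_one_sub_eq_span])
  refine ⟨PUnit, Finsupp.lsingle PUnit.unit ∘ₗ g, Finsupp.linearCombination R fun _ => x, ?_⟩
  rintro ⟨_, hn⟩
  obtain ⟨r, rfl⟩ := Submodule.mem_span_singleton.mp hn
  have hex : e • x = 0 :=
    (Submodule.mem_annihilator_span_singleton x e).mp (hx ▸ Ideal.mem_span_singleton_self e)
  have hrx : (⟨r • x, hn⟩ : R ∙ x) = r • ⟨x, Submodule.mem_span_singleton_self x⟩ := rfl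
  simp only [LinearMap.comp_apply, Finsupp.lsingle_apply, Finsupp.linearCombination_single]
  rw [hrx, map_smul, hg, smul_eq_mul, mul_smul, sub_smul, one_smul, hex, sub_zero]

end Modules

namespace IsVonNeumannRegular

variable {R : Type*} [CommRing R] (hR : IsVonNeumannRegular R)
include hR

theorem singlyProjective_iff {M : Type*} [AddCommGroup M] [Module R M] :
    SinglyProjective R M ↔ ∀ x : M, (R ∙ x).annihilator.IsGeneratedByIdempotent := by
  refine ⟨fun hM x => ?_, singlyProjective_of_annihilator⟩
  obtain ⟨ι, φ, π, hπφ⟩ := hM x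
  set x₀ : R ∙ x := ⟨x, Submodule.mem_span_singleton_self x⟩
  have hx : π (φ x₀) = x := hπφ x₀
  -- `x` and `φ x₀` have the same annihilator, that of the finitely many coordinates of `φ x₀`
  have hann : (R ∙ x).annihilator = (Ideal.span (Set.range (φ x₀))).annihilator := by
    ext r
    have hr : r • x = 0 ↔ r • φ x₀ = 0 :=
      ⟨fun h => by rw [← map_smul, show r • x₀ = 0 from Subtype.ext h, map_zero],
        fun h => by rw [← hx, ← map_smul, h, map_zero]⟩
    simp [Submodule.mem_annihilator_span, hr, Finsupp.ext_iff]
  rw [hann]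
  exact hR.annihilator_isGeneratedByIdempotent_of_fg (Submodule.fg_span (φ x₀).finite_range)

theorem singlyProjective_self : SinglyProjective R R :=
  hR.singlyProjective_iff.mpr fun a =>
    hR.annihilator_isGeneratedByIdempotent_of_fg (Submodule.fg_span_singleton a)

end IsVonNeumannRegular

section Dual

variable {R C : Type*} [CommRing R] [AddCommGroup C] [Module R C] {c : C}

theorem range_applyₗ_of_span_singleton_eq_top (hc : R ∙ c = ⊤) :
    LinearMap.range (LinearMap.applyₗ c : (C →ₗ[R] R) →ₗ[R] R) =
      (R ∙ c).annihilator.annihilator := by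
  ext r
  simp only [LinearMap.mem_range, LinearMap.applyₗ_apply_apply,
    Submodule.mem_annihilator (N := (R ∙ c).annihilator), Submodule.mem_annihilator_span_singleton,
    smul_eq_mul]
  constructor
  · rintro ⟨g, rfl⟩ s hs
    rw [mul_comm, ← smul_eq_mul, ← map_smul, hs, map_zero]
  · intro hr
    obtain ⟨g, hg⟩ := exists_linearMap_span_singleton_apply (R := R) c r fun s hs => by
      rw [Submodule.mem_annihilator_span_singleton, smul_eq_mul, mul_comm]
      exact hr s ((Submodule.mem_annihilator_span_singleton c s).mp hs)
    exact ⟨g ∘ₗ (LinearEquiv.ofTop _ hc).symm, hg⟩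

theorem applyₗ_injective_of_span_singleton_eq_top (hc : R ∙ c = ⊤) :
    Function.Injective (LinearMap.applyₗ c : (C →ₗ[R] R) →ₗ[R] R) :=
  fun _ _ h => LinearMap.ext_on hc (Set.eqOn_singleton.mpr h)

theorem module_finite_dual_iff_of_span_singleton_eq_top (hc : R ∙ c = ⊤) :
    Module.Finite R (C →ₗ[R] R) ↔ (R ∙ c).annihilator.annihilator.FG := by
  rw [Module.Finite.equiv_iff
      (LinearEquiv.ofInjective _ (applyₗ_injective_of_span_singleton_eq_top hc)),
    Module.Finite.iff_fg, range_applyₗ_of_span_singleton_eq_top hc]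
  rfl

end Dual

namespace PrimeSpectrum

variable {R : Type*} [CommRing R]

theorem vanishingIdeal_compl_zeroLocus [IsReduced R] (I : Ideal R) :
    vanishingIdeal (zeroLocus I)ᶜ = I.annihilator := by
  ext r
  simp only [mem_vanishingIdeal, Set.mem_compl_iff, mem_zeroLocus, SetLike.coe_subset_coe,
    Submodule.mem_annihilator, smul_eq_mul]
  refine ⟨fun h a ha => ?_, fun h p hp => ?_⟩
  · -- `r * a` lies in every prime: in those avoiding `a` because they contain `r`
    suffices r * a ∈ nilradical R from (mem_nilradical.mp this).eq_zero
    rw [← vanishingIdeal_univ, mem_vanishingIdeal]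
    intro p _
    by_cases hap : a ∈ p.asIdeal
    · exact p.asIdeal.mul_mem_left r hap
    · exact p.asIdeal.mul_mem_right a (h p fun hI => hap (hI ha))
  · obtain ⟨a, ha, hap⟩ := Set.not_subset.mp hp
    exact (p.isPrime.mem_or_mem (h a ha ▸ p.asIdeal.zero_mem)).resolve_right hap

theorem closure_compl_zeroLocus [IsReduced R] (I : Ideal R) :
    closure (zeroLocus I)ᶜ = zeroLocus (I.annihilator : Set R) := by
  rw [← zeroLocus_vanishingIdeal_eq_closure, vanishingIdeal_compl_zeroLocus]

end PrimeSpectrum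

namespace IsVonNeumannRegular

open PrimeSpectrum

variable {R : Type*} [CommRing R] (hR : IsVonNeumannRegular R)
include hR

theorem isClopen_zeroLocus_iff (I : Ideal R) :
    IsClopen (zeroLocus (I : Set R)) ↔ I.IsGeneratedByIdempotent := by
  rw [isClopen_iff_zeroLocus]
  refine exists_congr fun e => and_congr_right fun _ => ?_
  rw [← zeroLocus_span {e}, zeroLocus_eq_iff, (hR.isRadical _).radical, (hR.isRadical _).radical]

theorem extremallyDisconnected_iff :
    ExtremallyDisconnected (PrimeSpectrum R) ↔
      ∀ I : Ideal R, I.annihilator.IsGeneratedByIdempotent := by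
  have := hR.isReduced
  simp_rw [← hR.isClopen_zeroLocus_iff, ← closure_compl_zeroLocus]
  refine ⟨fun h I => ⟨isClosed_closure, h.open_closure _ (isClosed_zeroLocus _).isOpen_compl⟩,
    fun h => ⟨fun U hU => ?_⟩⟩
  obtain ⟨s, hs⟩ := (isOpen_iff U).mp hU
  rw [← compl_compl U, hs, ← zeroLocus_span]
  exact (h _).isOpen

end IsVonNeumannRegular

/-- for a commutative von Neumann regular ring `R` the following are equivalent:
(1) every product of singly projective modules is singly projective; (2) `R^R` is singly
projective; (3) `R` is a Baer ring; (4) the intersection of every family of finitely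
generated ideals is finitely generated; (5) `Hom_R(C, R)` is finitely generated for every
cyclic module `C`; (6) `Spec R` is extremally disconnected. -/
theorem vonNeumannRegular_baer_tfae (R : Type u) [CommRing R]
    (hvnr : ∀ a : R, ∃ b : R, a * b * a = a) :
    List.TFAE
      [∀ (ι : Type u) (M : ι → Type u) [∀ i, AddCommGroup (M i)] [∀ i, Module R (M i)],
        (∀ i, SinglyProjective R (M i)) → SinglyProjective R (∀ i, M i),
       SinglyProjective R (R → R),
       IsBaerRing R,
       ∀ (ι : Type u) (I : ι → Ideal R), (∀ i, (I i).FG) → (⨅ i, I i).FG,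
       ∀ (C : Type u) [AddCommGroup C] [Module R C],
        (∃ c : C, Submodule.span R ({c} : Set C) = ⊤) → Module.Finite R (C →ₗ[R] R),
       ExtremallyDisconnected (PrimeSpectrum R)] := by
  have hR : IsVonNeumannRegular R := hvnr
  tfae_have 1 → 2 := fun h1 => h1 R (fun _ => R) fun _ => hR.singlyProjective_self
  tfae_have 2 → 3 := fun h2 => isBaerRing_iff.mpr fun I => by
    simpa only [annihilator_span_singleton_indicator] using
      hR.singlyProjective_iff.mp h2 ((I : Set R).indicator id)
  tfae_have 3 → 1 := fun h3 ι M _ _ hM => hR.singlyProjective_iff.mpr fun x => by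
    rw [annihilator_span_singleton_pi]
    exact h3.isGeneratedByIdempotent_iInf fun i => hR.singlyProjective_iff.mp (hM i) (x i)
  tfae_have 3 → 4 := fun h3 ι I hI =>
    (h3.isGeneratedByIdempotent_iInf fun i => hR.isGeneratedByIdempotent_of_fg (hI i)).fg
  tfae_have 4 → 5 := fun h4 C _ _ ⟨c, hc⟩ => by
    rw [module_finite_dual_iff_of_span_singleton_eq_top hc,
      Submodule.annihilator_eq_iInf_annihilator_span_singleton]
    exact h4 _ _ fun s => (hR.annihilator_isGeneratedByIdempotent_of_fg
      (Submodule.fg_span_singleton (s : R))).fg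
  tfae_have 5 → 3 := fun h5 => isBaerRing_iff.mpr fun I => by
    have hc := Ideal.Quotient.span_singleton_one I
    have hfg := (module_finite_dual_iff_of_span_singleton_eq_top hc).mp (h5 _ ⟨_, hc⟩)
    rw [hc, Submodule.annihilator_top, Ideal.annihilator_quotient] at hfg
    exact hR.isGeneratedByIdempotent_of_fg hfg
  tfae_have 3 ↔ 6 := isBaerRing_iff.trans hR.extremallyDisconnected_iff.symm
  tfae_finish
end

section
/- Let R be a valuation ring, let M be a flat R-module and let E be an injective hull of M. Then E is a flat R-module. -/
/-!
Over a chain ring every finitely generated ideal is principal, so a module is flat as soon as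
each relation `r • x = 0` comes from `x = a • e` with `a * r = 0`. Given `r • x = 0` in `E`,
essentiality gives `s` with `0 ≠ s • x ∈ M`; then `s ∣ r`, say `r = s * c`, and flatness of `M`
writes `s • x = (s * b') • m` with `c * s * b' = 0`. Now `z = x - b' • m` is killed by `s` while
`s • b' • m ≠ 0`, which in a chain ring forces every annihilator of `b' • m` to kill `z`.
Injectivity of `E` then makes `z` divisible by `b'`, and `x = b' • (e + m)`.
-/

universe u v

open TensorProduct Submodule

variable {R : Type u} [CommRing R]

instance PreValuationRing.isBezout [PreValuationRing R] : IsBezout R := by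
  refine IsBezout.iff_span_pair_isPrincipal.mpr fun x y ↦ ?_
  rw [Ideal.span_insert]
  rcases ValuationRing.dvd_total x y with h | h
  · rw [sup_eq_left.mpr (Ideal.span_singleton_le_span_singleton.mpr h)]
    exact ⟨⟨x, rfl⟩⟩
  · rw [sup_eq_right.mpr (Ideal.span_singleton_le_span_singleton.mpr h)]
    exact ⟨⟨y, rfl⟩⟩

section Flat

variable {M : Type*} [AddCommGroup M] [Module R M]

theorem Module.Flat.mem_torsionOf_smul_top_of_smul_eq_zero [Module.Flat R M] {r : R} {x : M}
    (h : r • x = 0) : x ∈ Ideal.torsionOf R R r • (⊤ : Submodule R M) := by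
  obtain ⟨k, a, y, hxy, hay⟩ := Module.Flat.isTrivialRelation_of_sum_smul_eq_zero
    (f := fun _ : Unit ↦ r) (x := fun _ ↦ x) (by simpa using h)
  rw [show x = _ from hxy ()]
  exact sum_mem fun j _ ↦ smul_mem_smul (by simpa [mul_comm] using hay j) mem_top

theorem IsBezout.exists_eq_smul_of_mem_smul_top [IsBezout R] {I : Ideal R} {x : M}
    (hx : x ∈ I • (⊤ : Submodule R M)) : ∃ a ∈ I, ∃ e : M, x = a • e := by
  induction hx using Submodule.smul_induction_on' with
  | smul a ha e _ => exact ⟨a, ha, e, rfl⟩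
  | add x _ y _ hx hy =>
    obtain ⟨a, ha, e, rfl⟩ := hx
    obtain ⟨b, hb, f, rfl⟩ := hy
    obtain ⟨c, d, hcd⟩ := IsBezout.gcd_eq_sum a b
    obtain ⟨a', ha'⟩ := IsBezout.gcd_dvd_left a b
    obtain ⟨b', hb'⟩ := IsBezout.gcd_dvd_right a b
    refine ⟨IsBezout.gcd a b, hcd ▸ I.add_mem (I.mul_mem_left c ha) (I.mul_mem_left d hb),
      a' • e + b' • f, ?_⟩
    rw [smul_add, smul_smul, smul_smul, ← ha', ← hb']

theorem Submodule.exists_eq_tmul_of_mem_span_singleton {P : Type*} [AddCommGroup P] [Module R P]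
    (n : P) (ξ : (R ∙ n) ⊗[R] M) :
    ∃ x : M, ξ = (⟨n, mem_span_singleton_self n⟩ : R ∙ n) ⊗ₜ x := by
  induction ξ with
  | zero => exact ⟨0, (tmul_zero _ _).symm⟩
  | tmul m y =>
    obtain ⟨a, ha⟩ := mem_span_singleton.mp m.2
    exact ⟨a • y, by rw [← smul_tmul]; congr; exact Subtype.ext ha.symm⟩
  | add ξ η hξ hη =>
    obtain ⟨x, rfl⟩ := hξ
    obtain ⟨y, rfl⟩ := hη
    exact ⟨x + y, (tmul_add _ _ _).symm⟩

theorem IsBezout.flat_iff_forall_smul_eq_zero [IsBezout R] :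
    Module.Flat R M ↔
      ∀ (r : R) (x : M), r • x = 0 → ∃ a : R, a * r = 0 ∧ ∃ e : M, x = a • e := by
  refine ⟨fun _ r x h ↦ ?_, fun h ↦ ?_⟩
  · exact IsBezout.exists_eq_smul_of_mem_smul_top
      (Module.Flat.mem_torsionOf_smul_top_of_smul_eq_zero h)
  refine Module.Flat.iff_lift_lsmul_comp_subtype_injective.mpr fun I hI ↦ ?_
  obtain ⟨r, rfl⟩ := (IsBezout.isPrincipal_of_FG I hI).principal
  refine (injective_iff_map_eq_zero _).mpr fun ξ hξ ↦ ?_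
  obtain ⟨x, rfl⟩ := exists_eq_tmul_of_mem_span_singleton r ξ
  obtain ⟨a, har, e, rfl⟩ := h r x (by simpa using hξ)
  rw [← smul_tmul, show a • (⟨r, _⟩ : R ∙ r) = 0 from Subtype.ext har, zero_tmul]

end Flat

variable {E : Type v} [AddCommGroup E] [Module R E]

/-- The cyclic module `R ∙ (b • id)` inside `E → E` stands in for the ideal `R ∙ b`: it lives in
the universe of `E`, so injectivity applies without a smallness assumption on `R`. -/
theorem Module.Injective.exists_eq_smul (hinj : Module.Injective R E) {b : R} {z : E}
    (h : ∀ t : R, (∀ v : E, t • b • v = 0) → t • z = 0) : ∃ e : E, z = b • e := by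
  set V : E → E := b • id
  have hker : Ideal.torsionOf R (E → E) V ≤ LinearMap.ker (LinearMap.toSpanSingleton R E z) :=
    fun t ht ↦ h t (congrFun ht)
  let g : (R ∙ V) →ₗ[R] E :=
    (Ideal.torsionOf R (E → E) V).liftQ (LinearMap.toSpanSingleton R E z) hker ∘ₗ
    (Ideal.quotTorsionOfEquivSpanSingleton R (E → E) V).symm
  have hg : g ⟨V, mem_span_singleton_self V⟩ = z := by
    have : (Ideal.quotTorsionOfEquivSpanSingleton R (E → E) V).symm
        ⟨V, mem_span_singleton_self V⟩ = Submodule.Quotient.mk 1 := by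
      rw [LinearEquiv.symm_apply_eq, Ideal.quotTorsionOfEquivSpanSingleton_apply_mk, one_smul]
    rw [LinearMap.comp_apply, LinearEquiv.coe_coe, this, liftQ_apply,
      LinearMap.toSpanSingleton_apply, one_smul]
  obtain ⟨φ, hφ⟩ := hinj.out (R ∙ V).subtype (injective_subtype _) g
  exact ⟨φ id, by rw [← hg, ← hφ, subtype_apply, map_smul]⟩

theorem exists_smul_mem_ne_zero_of_essential {M : Submodule R E}
    (hess : ∀ K : Submodule R E, K ⊓ M = ⊥ → K = ⊥) {x : E} (hx : x ≠ 0) :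
    ∃ s : R, s • x ∈ M ∧ s • x ≠ 0 := by
  by_contra! h
  refine hx (span_singleton_eq_bot.mp (hess _ (eq_bot_iff.mpr ?_)))
  rintro _ ⟨hy, hyM⟩
  obtain ⟨s, rfl⟩ := mem_span_singleton.mp hy
  exact (mem_bot R).mpr (h s hyM)

section PreValuationRing

variable [PreValuationRing R]

theorem PreValuationRing.smul_eq_zero_of_smul_ne_zero {s t : R} {z w : E} (hsz : s • z = 0)
    (hsw : s • w ≠ 0) (htw : t • w = 0) : t • z = 0 := by
  rcases ValuationRing.dvd_total s t with ⟨k, rfl⟩ | ⟨k, rfl⟩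
  · rw [mul_comm, mul_smul, hsz, smul_zero]
  · exact absurd (by rw [mul_comm, mul_smul, htw, smul_zero]) hsw

theorem PreValuationRing.exists_eq_smul_of_smul_eq_zero (hinj : Module.Injective R E)
    (M : Submodule R E) [Module.Flat R M] (hess : ∀ K : Submodule R E, K ⊓ M = ⊥ → K = ⊥)
    {r : R} {x : E} (hrx : r • x = 0) : ∃ a : R, a * r = 0 ∧ ∃ e : E, x = a • e := by
  rcases eq_or_ne r 0 with rfl | hr
  · exact ⟨1, mul_zero 1, x, (one_smul R x).symm⟩
  rcases eq_or_ne x 0 with rfl | hx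
  · exact ⟨0, zero_mul r, 0, (smul_zero 0).symm⟩
  obtain ⟨s, hsM, hsx⟩ := exists_smul_mem_ne_zero_of_essential hess hx
  obtain ⟨c, rfl⟩ : s ∣ r := (ValuationRing.dvd_total s r).resolve_right
    fun ⟨d, hd⟩ ↦ hsx (by rw [hd, mul_comm, mul_smul, hrx, smul_zero])
  have hcy : c • (⟨s • x, hsM⟩ : M) = 0 :=
    Subtype.ext (by rw [SetLike.val_smul, smul_smul, mul_comm, hrx]; rfl)
  obtain ⟨b, hbc, m, hm⟩ := IsBezout.flat_iff_forall_smul_eq_zero.mp ‹_› c _ hcy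
  have hy : s • x = b • (m : E) := congrArg Subtype.val hm
  obtain ⟨b', rfl⟩ : s ∣ b := (ValuationRing.dvd_total s b).resolve_right
    fun ⟨d, hd⟩ ↦ hr (by rw [hd, mul_right_comm, hbc, zero_mul])
  set z := x - b' • (m : E)
  have hsz : s • z = 0 := by rw [smul_sub, hy, smul_smul, sub_self]
  obtain ⟨e, he⟩ := hinj.exists_eq_smul fun t ht ↦
    smul_eq_zero_of_smul_ne_zero hsz (by rwa [smul_smul, ← hy]) (ht m)
  exact ⟨b', by linear_combination hbc, e + m, by rw [smul_add, ← he, sub_add_cancel]⟩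

end PreValuationRing

/-- let `R` be a valuation ring (a commutative ring whose ideals are totally
ordered by inclusion), `M` a flat submodule of a module `E` which is an injective hull of `M`
(`E` is injective and `M` is essential in `E`).  Then `E` is flat. -/
theorem injectiveHull_flat_of_flat (R : Type u) [CommRing R]
    (hval : ∀ I J : Ideal R, I ≤ J ∨ J ≤ I)
    (E : Type v) [AddCommGroup E] [Module R E] (hinj : Module.Injective R E)
    (M : Submodule R E) (hflat : Module.Flat R M)
    (hess : ∀ K : Submodule R E, K ⊓ M = ⊥ → K = ⊥) :
    Module.Flat R E := by
  have : PreValuationRing R := PreValuationRing.iff_ideal_total.mpr ⟨hval⟩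
  exact IsBezout.flat_iff_forall_smul_eq_zero.mpr fun _ _ hrx ↦
    PreValuationRing.exists_eq_smul_of_smul_eq_zero hinj M hess hrx
end

section
/- Let R be a valuation ring with maximal ideal P and let M be a flat R-module. Then M contains a pure free submodule N such that the inclusion induces an isomorphism N/P·N ≅ M/P·M. -/
universe u v

/-- A submodule `N` of an `R`-module `M` is pure if for every `R`-module `B` the induced map
`B ⊗ N → B ⊗ M` is injective. -/
def Submodule.IsPureSubmodule {R : Type u} [CommRing R] {M : Type v} [AddCommGroup M]
    [Module R M] (N : Submodule R M) : Prop :=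
  ∀ (B : Type v) [AddCommGroup B] [Module R B],
    Function.Injective (LinearMap.lTensor B N.subtype)

/-!
Lift a basis of `M/𝔪M` to a family `x` in `M` and let `N` be its span. Everything rests on one
fact: if `∑ bᵢ ⊗ xᵢ = 0` in `B ⊗ M`, then all `bᵢ = 0`. Indeed, by flatness of `M` such a relation
vanishes trivially, `xᵢ = ∑ⱼ aᵢⱼ yⱼ` with `∑ᵢ aᵢⱼ bᵢ = 0`. As the `xᵢ` are independent modulo `𝔪`,
the rows of `a` are independent modulo `𝔪`, so `a` has a right inverse modulo `𝔪`, hence over the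
local ring `R`, and this kills `b`. For `B = R` the fact says that `x` is linearly independent, so
`N` is free; for arbitrary `B` it is the purity of `N`.
-/

open IsLocalRing TensorProduct Matrix

namespace Matrix

variable {m n : Type*} [Fintype m] [Fintype n] [DecidableEq m]

theorem exists_mul_eq_one_of_ker_vecMulLinear_eq_bot {K : Type*} [Field K] [DecidableEq n]
    {A : Matrix m n K} (hA : LinearMap.ker A.vecMulLinear = ⊥) :
    ∃ B : Matrix n m K, A * B = 1 := by
  obtain ⟨g, hg⟩ := A.vecMulLinear.exists_leftInverse_of_injective hA
  refine ⟨(LinearMap.toMatrix' g)ᵀ, ?_⟩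
  have hvec : A.vecMulLinear = toLin' Aᵀ := by
    ext; simp
  rw [← transpose_transpose A, ← transpose_mul, ← LinearMap.toMatrix'_toLin' Aᵀ,
    ← LinearMap.toMatrix'_comp, ← hvec, hg, LinearMap.toMatrix'_id, transpose_one]

theorem exists_mul_eq_one_of_map_mul_eq_one {R : Type*} [CommRing R] [IsLocalRing R]
    {A : Matrix m n R} {B : Matrix n m (R ⧸ maximalIdeal R)}
    (hAB : A.map (Ideal.Quotient.mk (maximalIdeal R)) * B = 1) :
    ∃ B' : Matrix n m R, A * B' = 1 := by
  obtain ⟨B', rfl⟩ : ∃ B', B'.map (Ideal.Quotient.mk (maximalIdeal R)) = B :=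
    ⟨B.map (Function.surjInv Ideal.Quotient.mk_surjective), by ext; simp [Function.surjInv_eq]⟩
  have hdet : IsUnit (A * B').det := by
    rw [← IsLocalRing.notMem_maximalIdeal, ← Ideal.Quotient.eq_zero_iff_mem, RingHom.map_det,
      RingHom.mapMatrix_apply, Matrix.map_mul, hAB, det_one]
    exact one_ne_zero
  exact ⟨B' * (A * B')⁻¹, by rw [← Matrix.mul_assoc, mul_nonsing_inv _ hdet]⟩

theorem eq_zero_of_mul_eq_one_of_sum_smul_eq_zero {R B : Type*} [CommRing R] [AddCommGroup B]
    [Module R B] {A : Matrix m n R} {L : Matrix n m R} (hAL : A * L = 1) {b : m → B}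
    (hb : ∀ j, ∑ i, A i j • b i = 0) : b = 0 := by
  funext i'
  calc b i' = ∑ i, (A * L) i i' • b i := by simp [hAL, one_apply]
    _ = ∑ j, L j i' • ∑ i, A i j • b i := by
      simp only [mul_apply, Finset.sum_smul, Finset.smul_sum, smul_smul]
      rw [Finset.sum_comm]
      simp_rw [mul_comm]
    _ = 0 := by simp [hb]

end Matrix

theorem LinearIndependent.ker_vecMulLinear_eq_bot {S Q ι κ : Type*} [Ring S] [AddCommGroup Q]
    [Module S Q] [Fintype ι] [Fintype κ] {x : ι → Q} (hx : LinearIndependent S x)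
    {A : Matrix ι κ S} {y : κ → Q} (hxy : ∀ i, x i = ∑ j, A i j • y j) :
    LinearMap.ker A.vecMulLinear = ⊥ := by
  refine LinearMap.ker_eq_bot'.mpr fun c hc ↦ funext <| Fintype.linearIndependent_iff.mp hx c ?_
  calc ∑ i, c i • x i = ∑ j, (c ᵥ* A) j • y j := by
        simp only [hxy, Finset.smul_sum, smul_smul, vecMul, dotProduct, Finset.sum_smul]
        exact Finset.sum_comm
    _ = 0 := by simp [← vecMulLinear_apply, hc]

section IdealQuotient

variable {R : Type*} {M : Type v} [CommRing R] [AddCommGroup M] [Module R M] (I : Ideal R)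

theorem exists_linearIndependent_mkQ_span_eq_top [I.IsMaximal] :
    ∃ (ι : Type v) (x : ι → M), LinearIndependent (R ⧸ I) ((I • ⊤ : Submodule R M).mkQ ∘ x) ∧
      Submodule.span (R ⧸ I) (Set.range ((I • ⊤ : Submodule R M).mkQ ∘ x)) = ⊤ := by
  let := Ideal.Quotient.field I
  let V := Module.Basis.ofVectorSpace (R ⧸ I) (M ⧸ (I • ⊤ : Submodule R M))
  have hV : (I • ⊤ : Submodule R M).mkQ ∘ (Function.surjInv (Submodule.mkQ_surjective _) ∘ V) =
      V :=
    funext fun i ↦ Function.surjInv_eq _ _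
  refine ⟨_, Function.surjInv (Submodule.mkQ_surjective _) ∘ V, ?_, ?_⟩ <;> rw [hV]
  exacts [V.linearIndependent, V.span_eq]

variable {ι : Type*} {x : ι → M}

theorem surjective_mkQ_comp_subtype_span
    (hx : Submodule.span (R ⧸ I) (Set.range ((I • ⊤ : Submodule R M).mkQ ∘ x)) = ⊤) :
    Function.Surjective
      ((I • ⊤ : Submodule R M).mkQ ∘ₗ (Submodule.span R (Set.range x)).subtype) := by
  rw [← LinearMap.range_eq_top, LinearMap.range_comp, Submodule.range_subtype, Submodule.map_span,
    ← Set.range_comp, ← Submodule.restrictScalars_span R (R ⧸ I) Ideal.Quotient.mk_surjective, hx,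
    Submodule.restrictScalars_top]

theorem ker_mkQ_comp_subtype_span
    (hx : LinearIndependent (R ⧸ I) ((I • ⊤ : Submodule R M).mkQ ∘ x)) :
    LinearMap.ker ((I • ⊤ : Submodule R M).mkQ ∘ₗ (Submodule.span R (Set.range x)).subtype) =
      I • ⊤ := by
  refine le_antisymm (fun n hn ↦ ?_) ?_
  · rw [Submodule.mem_smul_top_iff, Submodule.mem_ideal_smul_span_iff_exists_sum]
    obtain ⟨c, hc⟩ := Finsupp.mem_span_range_iff_exists_finsupp.mp n.2
    refine ⟨c, fun i ↦ ?_, hc⟩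
    have hc0 := linearIndependent_iff.mp hx (c.mapRange (Ideal.Quotient.mk I) (map_zero _)) ?_
    · simpa [Ideal.Quotient.eq_zero_iff_mem] using DFunLike.congr_fun hc0 i
    rw [Finsupp.linearCombination_apply, Finsupp.sum_mapRange_index (by simp)]
    simp only [LinearMap.mem_ker, LinearMap.comp_apply, Submodule.subtype_apply, ← hc] at hn
    simpa [Finsupp.sum, map_sum, Module.Quotient.mk_smul_mk] using hn
  · rw [Submodule.smul_le]
    intro r hr n _
    rw [LinearMap.mem_ker, LinearMap.comp_apply, Submodule.mkQ_apply,
      Submodule.Quotient.mk_eq_zero]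
    exact Submodule.smul_mem_smul hr Submodule.mem_top

end IdealQuotient

section Flat

variable {R M : Type*} [CommRing R] [IsLocalRing R] [AddCommGroup M] [Module R M]
  [Module.Flat R M] {ι : Type*} {x : ι → M}

theorem eq_zero_of_sum_tmul_eq_zero_of_linearIndependent_mkQ [Fintype ι]
    (hx : LinearIndependent (R ⧸ maximalIdeal R) ((maximalIdeal R • ⊤ : Submodule R M).mkQ ∘ x))
    {B : Type*} [AddCommGroup B] [Module R B] {b : ι → B} (hb : ∑ i, b i ⊗ₜ[R] x i = 0) :
    b = 0 := by
  classical
  let : Field (R ⧸ maximalIdeal R) := Ideal.Quotient.field (maximalIdeal R)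
  obtain ⟨d, a, y, hxy, hab⟩ := vanishesTrivially_of_sum_tmul_eq_zero_of_rTensor_injective R
    (Module.Flat.rTensor_preserves_injective_linearMap _ (Submodule.injective_subtype _)) hb
  have hker : LinearMap.ker ((of a).map (Ideal.Quotient.mk (maximalIdeal R))).vecMulLinear = ⊥ :=
    hx.ker_vecMulLinear_eq_bot (y := (maximalIdeal R • ⊤ : Submodule R M).mkQ ∘ y) fun i ↦ by
      simp [hxy i]
  obtain ⟨L, hL⟩ := exists_mul_eq_one_of_ker_vecMulLinear_eq_bot hker
  obtain ⟨L', hL'⟩ := exists_mul_eq_one_of_map_mul_eq_one hL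
  exact eq_zero_of_mul_eq_one_of_sum_smul_eq_zero hL' hab

variable
  (hx : LinearIndependent (R ⧸ maximalIdeal R) ((maximalIdeal R • ⊤ : Submodule R M).mkQ ∘ x))
include hx

theorem injective_lTensor_linearCombination_of_linearIndependent_mkQ (B : Type*)
    [AddCommGroup B] [Module R B] :
    Function.Injective ((Finsupp.linearCombination R x).lTensor B) := by
  classical
  have hsum (g : ι →₀ B) : (Finsupp.linearCombination R x).lTensor B
      ((finsuppScalarRight R R B ι).symm g) = g.sum fun i b ↦ b ⊗ₜ x i := by
    conv_lhs => rw [← g.sum_single]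
    simp [Finsupp.sum, map_sum, finsuppScalarRight_symm_apply_single]
  refine (injective_iff_map_eq_zero _).mpr fun t ht ↦ ?_
  obtain ⟨g, rfl⟩ := (finsuppScalarRight R R B ι).symm.surjective t
  rw [hsum, Finsupp.sum, ← Finset.sum_coe_sort] at ht
  have hg :=
    eq_zero_of_sum_tmul_eq_zero_of_linearIndependent_mkQ (hx.comp _ Subtype.val_injective) ht
  suffices g = 0 by simp [this]
  ext i
  by_contra hi
  exact hi (congrFun hg ⟨i, Finsupp.mem_support_iff.mpr hi⟩)

theorem linearIndependent_of_linearIndependent_mkQ : LinearIndependent R x := by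
  have hf : ⇑(Finsupp.linearCombination R x) =
      TensorProduct.lid R M ∘ (Finsupp.linearCombination R x).lTensor R ∘
        (TensorProduct.lid R (ι →₀ R)).symm := by
    ext; simp
  rw [LinearIndependent, hf]
  exact (TensorProduct.lid R M).injective.comp
    ((injective_lTensor_linearCombination_of_linearIndependent_mkQ hx R).comp
      (TensorProduct.lid R _).symm.injective)

theorem isPureSubmodule_span_of_linearIndependent_mkQ :
    (Submodule.span R (Set.range x)).IsPureSubmodule := by
  intro B _ _
  let e := (linearIndependent_of_linearIndependent_mkQ hx).linearCombinationEquiv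
  have hcomp : Finsupp.linearCombination R x = (Submodule.span R (Set.range x)).subtype ∘ₗ e := by
    ext; simp [e]
  have hinj := injective_lTensor_linearCombination_of_linearIndependent_mkQ hx B
  rw [hcomp, LinearMap.lTensor_comp, LinearMap.coe_comp] at hinj
  exact (Function.Injective.of_comp_iff' _ (LinearEquiv.lTensor B e).bijective).mp hinj

end Flat

theorem flat_contains_pure_free_submodule_general (R : Type u) [CommRing R] [IsLocalRing R]
    (M : Type v) [AddCommGroup M] [Module R M] (hflat : Module.Flat R M) :
    ∃ N : Submodule R M, N.IsPureSubmodule ∧ Module.Free R N ∧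
      Function.Surjective
        ((IsLocalRing.maximalIdeal R • (⊤ : Submodule R M)).mkQ ∘ₗ N.subtype) ∧
      LinearMap.ker ((IsLocalRing.maximalIdeal R • (⊤ : Submodule R M)).mkQ ∘ₗ N.subtype) =
        IsLocalRing.maximalIdeal R • (⊤ : Submodule R N) := by
  obtain ⟨ι, x, hind, hspan⟩ := exists_linearIndependent_mkQ_span_eq_top (M := M) (maximalIdeal R)
  exact ⟨_, isPureSubmodule_span_of_linearIndependent_mkQ hind,
    .of_basis (.span (linearIndependent_of_linearIndependent_mkQ hind)),
    surjective_mkQ_comp_subtype_span _ hspan, ker_mkQ_comp_subtype_span _ hind⟩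

/-- let `R` be a valuation ring with maximal ideal `P` and `M` a flat
`R`-module.  Then `M` contains a pure free submodule `N` such that the inclusion induces an
isomorphism `N/P·N ≅ M/P·M` (the induced map `N → M/P·M` is surjective with kernel `P·N`). -/
theorem flat_contains_pure_free_submodule (R : Type u) [CommRing R] [IsLocalRing R]
    (hval : ∀ I J : Ideal R, I ≤ J ∨ J ≤ I)
    (M : Type v) [AddCommGroup M] [Module R M] (hflat : Module.Flat R M) :
    ∃ N : Submodule R M, N.IsPureSubmodule ∧ Module.Free R N ∧
      Function.Surjective
        ((IsLocalRing.maximalIdeal R • (⊤ : Submodule R M)).mkQ ∘ₗ N.subtype) ∧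
      LinearMap.ker ((IsLocalRing.maximalIdeal R • (⊤ : Submodule R M)).mkQ ∘ₗ N.subtype) =
        IsLocalRing.maximalIdeal R • (⊤ : Submodule R N) :=
  flat_contains_pure_free_submodule_general R M hflat
end

section
/- Let R be a valuation ring. A non-zero R-module M is singly projective if and only if for each x ∈ M there exists y ∈ M such that the annihilator of y in R is zero and x ∈ R·y. -/
/-!
Let `π ∘ φ` be the identity of `R x`, with `φ` into a free module, and put `f = φ x`. Since
divisibility in `R` is total, `f = f i • w` for one of its own coordinates `f i`; hence
`x = f i • y` with `y = π w`, and `r • x = 0` forces `r * f i = 0`. If `r • y = 0`, either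
`f i ∣ r`, and then `r = 0`, or `r ∣ f i`, and then `x = 0`. Conversely, if `y` has zero
annihilator then `R y ≅ R`, through which the inclusion `R x ⊆ R y ⊆ M` factors.
-/

universe u v

open Submodule

theorem singlyProjective_of_forall_exists_mem_span_singleton {R : Type u} [Ring R]
    {M : Type v} [AddCommGroup M] [Module R M]
    (h : ∀ x : M, ∃ y : M, (∀ r : R, r • y = 0 → r = 0) ∧ x ∈ span R {y}) :
    SinglyProjective R M := by
  intro x
  obtain ⟨y, hy, hxy⟩ := h x
  set σ := LinearMap.toSpanSingleton R M y
  have hσ : Function.Injective σ := fun r s hrs =>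
    sub_eq_zero.mp (hy _ (by simpa [σ, sub_smul, sub_eq_zero] using hrs))
  have hle : span R {x} ≤ LinearMap.range σ := by
    rw [← LinearMap.span_singleton_eq_range]
    exact span_le.mpr (by simpa using hxy)
  refine ⟨PUnit, (Finsupp.lsingle PUnit.unit).comp
      ((LinearEquiv.ofInjective σ hσ).symm.toLinearMap.comp (inclusion hle)),
    Finsupp.linearCombination R fun _ => y, fun n => ?_⟩
  simp only [LinearMap.comp_apply, LinearEquiv.coe_coe, Finsupp.lsingle_apply,
    Finsupp.linearCombination_single]
  exact congrArg Subtype.val ((LinearEquiv.ofInjective σ hσ).apply_symm_apply (inclusion hle n))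

section PreValuationRing

variable {R : Type*} [CommRing R] [PreValuationRing R] {M : Type*} [AddCommGroup M]
  [Module R M]

theorem Finsupp.exists_eq_apply_smul {ι : Type*} {f : ι →₀ R} (hf : f ≠ 0) :
    ∃ i w, f = f i • w := by
  classical
  obtain ⟨i, -, hi⟩ := f.support.exists_max_image (fun j => Ideal.span {f j})
    (Finsupp.support_nonempty_iff.mpr hf)
  have hdvd : ∀ j, f i ∣ f j := fun j => by
    by_cases hj : j ∈ f.support
    · exact Ideal.span_singleton_le_span_singleton.mp (hi j hj)
    · simp [Finsupp.notMem_support_iff.mp hj]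
  choose g hg using hdvd
  refine ⟨i, Finsupp.onFinset f.support (fun j => if f j = 0 then 0 else g j) fun j hj => ?_, ?_⟩
  · simpa using (ite_ne_left_iff.mp hj).1
  · ext j
    by_cases hj : f j = 0 <;> simp [hj, ← hg j]

theorem eq_zero_of_smul_eq_zero_of_eq_smul {x y : M} {c : R} (hx : x ≠ 0) (hxy : x = c • y)
    (hann : ∀ r : R, r • x = 0 → r * c = 0) {r : R} (hr : r • y = 0) : r = 0 := by
  obtain ⟨s, rfl⟩ | ⟨s, rfl⟩ := ValuationRing.dvd_total c r
  · rw [mul_comm]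
    exact hann s (by rw [hxy, smul_smul, mul_comm, hr])
  · exact absurd (by rw [hxy, mul_comm, mul_smul, hr, smul_zero]) hx

theorem exists_mem_span_singleton_of_factors_through_free {x : M} (hx : x ≠ 0) {ι : Type*}
    (φ : span R {x} →ₗ[R] (ι →₀ R)) (π : (ι →₀ R) →ₗ[R] M)
    (hπφ : π (φ ⟨x, mem_span_singleton_self x⟩) = x) :
    ∃ y : M, (∀ r : R, r • y = 0 → r = 0) ∧ x ∈ span R {y} := by
  set f := φ ⟨x, mem_span_singleton_self x⟩
  have hf : f ≠ 0 := fun h => hx (by rw [← hπφ, h, map_zero])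
  obtain ⟨i, w, hfw⟩ := Finsupp.exists_eq_apply_smul hf
  have hxw : x = f i • π w := by rw [← map_smul, ← hfw, hπφ]
  have hann : ∀ r : R, r • x = 0 → r * f i = 0 := fun r hr => by
    have : r • f = 0 := by
      rw [← map_smul, ← map_zero φ]
      exact congrArg φ (Subtype.ext hr)
    simpa using DFunLike.congr_fun this i
  exact ⟨π w, fun r => eq_zero_of_smul_eq_zero_of_eq_smul hx hxw hann,
    mem_span_singleton.mpr ⟨f i, hxw.symm⟩⟩

end PreValuationRing

/-- over a valuation ring `R`, a non-zero `R`-module `M` is singly projective if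
and only if each `x ∈ M` lies in `R·y` for some `y ∈ M` with zero annihilator. -/
theorem singlyProjective_iff_forall_mem_span_of_annihilator_eq_bot (R : Type u) [CommRing R]
    (hval : ∀ I J : Ideal R, I ≤ J ∨ J ≤ I)
    (M : Type v) [AddCommGroup M] [Module R M] (hM : ∃ x : M, x ≠ 0) :
    SinglyProjective R M ↔
      ∀ x : M, ∃ y : M, (∀ r : R, r • y = 0 → r = 0) ∧ x ∈ Submodule.span R ({y} : Set M) := by
  have : PreValuationRing R := PreValuationRing.iff_ideal_total.mpr ⟨hval⟩
  refine ⟨fun hsp => ?_, singlyProjective_of_forall_exists_mem_span_singleton⟩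
  have key (x : M) (hx : x ≠ 0) : ∃ y : M, (∀ r : R, r • y = 0 → r = 0) ∧ x ∈ span R {y} := by
    obtain ⟨ι, φ, π, hπφ⟩ := hsp x
    exact exists_mem_span_singleton_of_factors_through_free hx φ π (hπφ _)
  intro x
  obtain rfl | hx := eq_or_ne x 0
  · obtain ⟨m, hm⟩ := hM
    obtain ⟨y, hy, -⟩ := key m hm
    exact ⟨y, hy, zero_mem _⟩
  · exact key x hx
end
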